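/- arXiv:2504.15879 — 2 statements merged into one kernel-verified Lean document; each statement's English description precedes it below -/
import Mathlib

section
/- Let $Y = X + Z$ where $X, Z \in \mathbb{R}^{p_1 \times p_2}$. Let $T_\gamma(Y)$ denote soft singular value thresholding of $Y$ at level $\gamma$, i.e., $T_\gamma(Y) = \hat U T_\gamma(\hat\Sigma) \hat V^\top$ where $Y = \hat U \hat\Sigma \hat V^\top$ is an SVD and $(T_\gamma(\hat\Sigma))_{jj} = \max\{0, \hat\Sigma_{jj} - \gamma\}$. If $\gamma \geq 1.01 \|Z\|_{op}$, then there is an absolute constant $C > 0$ such that $\|T_\gamma(Y) - X\|_F^2 \leq C \sum_{k=1}^{\min\{p_1,p_2\}} \min\{\gamma^2, \sigma_k^2(X)\}$, where $\sigma_k(X)$ are the singular values of $X$ in non-increasing order. -/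
set_option linter.unusedSectionVars false

noncomputable section
open Matrix

/-- Rectangular diagonal matrix with diagonal entries `σ 0, σ 1, …`. -/
def rectDiag (p q : ℕ) (σ : ℕ → ℝ) : Matrix (Fin p) (Fin q) ℝ :=
  Matrix.of fun i j => if (i : ℕ) = (j : ℕ) then σ (i : ℕ) else 0

/-- Operator (spectral) norm of a real matrix. -/
def opNorm {m n : Type*} [Fintype m] [Fintype n] [DecidableEq n]
    (A : Matrix m n ℝ) : ℝ :=
  ‖LinearMap.toContinuousLinearMap (Matrix.toEuclideanLin A)‖

/-- Squared Frobenius norm. -/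
def frobSq {m n : Type*} [Fintype m] [Fintype n] (A : Matrix m n ℝ) : ℝ :=
  ∑ i, ∑ j, (A i j) ^ 2

namespace SVT

variable {m n k : Type*} [Fintype m] [Fintype n] [Fintype k] [DecidableEq m] [DecidableEq n] [DecidableEq k]

/-- Euclidean norm of a plain vector. -/
def nv {n : Type*} [Fintype n] (v : n → ℝ) : ℝ :=
  ‖(WithLp.equiv 2 (n → ℝ)).symm v‖

lemma nv_nonneg (v : n → ℝ) : 0 ≤ nv v := norm_nonneg _

lemma nv_sq (v : n → ℝ) : nv v ^ 2 = ∑ i, v i ^ 2 := by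
  rw [nv, EuclideanSpace.norm_eq, Real.sq_sqrt]
  · simp [sq_abs]
  · positivity

lemma nv_eq_sqrt (v : n → ℝ) : nv v = Real.sqrt (∑ i, v i ^ 2) := by
  rw [← nv_sq, Real.sqrt_sq (nv_nonneg v)]

lemma nv_add_le (v w : n → ℝ) : nv (v + w) ≤ nv v + nv w := by
  simpa [nv] using norm_add_le ((WithLp.equiv 2 (n → ℝ)).symm v) ((WithLp.equiv 2 (n → ℝ)).symm w)

lemma dot_le_nv_mul_nv (v w : n → ℝ) : v ⬝ᵥ w ≤ nv v * nv w := by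
  have h := real_inner_le_norm
    ((WithLp.equiv 2 (n → ℝ)).symm v) ((WithLp.equiv 2 (n → ℝ)).symm w)
  have h2 : (inner ℝ ((WithLp.equiv 2 (n → ℝ)).symm v) ((WithLp.equiv 2 (n → ℝ)).symm w) : ℝ)
      = v ⬝ᵥ w := by
    simp [PiLp.inner_apply, dotProduct, mul_comm]
  rw [h2] at h
  exact h

lemma dot_self_eq (v : n → ℝ) : v ⬝ᵥ v = ∑ i, v i ^ 2 := by
  simp [dotProduct, sq]

lemma mulVec_nv_le (A : Matrix m n ℝ) (x : n → ℝ) : nv (A *ᵥ x) ≤ opNorm A * nv x := by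
  have h := (LinearMap.toContinuousLinearMap (Matrix.toEuclideanLin A)).le_opNorm
    ((WithLp.equiv 2 (n → ℝ)).symm x)
  simpa [nv, opNorm, Matrix.toEuclideanLin_apply_piLp_toLp, Matrix.toEuclideanLin_apply] using h

lemma opNorm_le_of (A : Matrix m n ℝ) {c : ℝ} (hc : 0 ≤ c)
    (h : ∀ x, nv (A *ᵥ x) ≤ c * nv x) : opNorm A ≤ c := by
  apply ContinuousLinearMap.opNorm_le_bound _ hc
  intro y
  have := h (WithLp.equiv 2 (n → ℝ) y)
  simpa [nv, Matrix.toEuclideanLin_apply_piLp_toLp, Matrix.toEuclideanLin_apply] using this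

lemma opNorm_nonneg (A : Matrix m n ℝ) : 0 ≤ opNorm A := norm_nonneg _

lemma opNorm_add_le (A B : Matrix m n ℝ) : opNorm (A + B) ≤ opNorm A + opNorm B := by
  refine opNorm_le_of _ (add_nonneg (opNorm_nonneg A) (opNorm_nonneg B)) (fun x => ?_)
  rw [Matrix.add_mulVec, add_mul]
  exact le_trans (nv_add_le _ _) (add_le_add (mulVec_nv_le A x) (mulVec_nv_le B x))

lemma opNorm_mul_le (A : Matrix m k ℝ) (B : Matrix k n ℝ) :
    opNorm (A * B) ≤ opNorm A * opNorm B := by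
  refine opNorm_le_of _ (mul_nonneg (opNorm_nonneg A) (opNorm_nonneg B)) (fun x => ?_)
  rw [← Matrix.mulVec_mulVec]
  calc nv (A *ᵥ (B *ᵥ x)) ≤ opNorm A * nv (B *ᵥ x) := mulVec_nv_le _ _
    _ ≤ opNorm A * (opNorm B * nv x) :=
      mul_le_mul_of_nonneg_left (mulVec_nv_le _ _) (opNorm_nonneg _)
    _ = opNorm A * opNorm B * nv x := by ring

lemma opNorm_transpose_le (A : Matrix m n ℝ) : opNorm Aᵀ ≤ opNorm A := by
  refine opNorm_le_of _ (opNorm_nonneg A) (fun x => ?_)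
  set a := Aᵀ *ᵥ x with ha
  have h1 : nv a ^ 2 = (A *ᵥ a) ⬝ᵥ x := by
    rw [nv_sq, ← dot_self_eq, ha]
    rw [Matrix.dotProduct_mulVec, Matrix.vecMul_transpose]
  have h2 : nv a ^ 2 ≤ opNorm A * nv a * nv x := by
    rw [h1]
    calc (A *ᵥ a) ⬝ᵥ x ≤ nv (A *ᵥ a) * nv x := dot_le_nv_mul_nv _ _
      _ ≤ opNorm A * nv a * nv x :=
        mul_le_mul_of_nonneg_right (mulVec_nv_le _ _) (nv_nonneg _)
  rcases eq_or_lt_of_le (nv_nonneg a) with h0 | h0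
  · rw [← h0]
    exact mul_nonneg (opNorm_nonneg A) (nv_nonneg x)
  · nlinarith [nv_nonneg a]


lemma nv_le_of_sq_le {a : m → ℝ} {b : n → ℝ} {c : ℝ} (hc : 0 ≤ c)
    (h : ∑ i, a i ^ 2 ≤ c ^ 2 * ∑ i, b i ^ 2) : nv a ≤ c * nv b := by
  rw [nv_eq_sqrt, nv_eq_sqrt]
  calc Real.sqrt (∑ i, a i ^ 2) ≤ Real.sqrt (c ^ 2 * ∑ i, b i ^ 2) := Real.sqrt_le_sqrt h
    _ = c * Real.sqrt (∑ i, b i ^ 2) := by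
        rw [Real.sqrt_mul (by positivity), Real.sqrt_sq hc]

lemma nvsq_unit {U : Matrix m n ℝ} (hU : Uᵀ * U = 1) (v : n → ℝ) :
    ∑ i, (U *ᵥ v) i ^ 2 = ∑ i, v i ^ 2 := by
  rw [← dot_self_eq, ← dot_self_eq]
  calc (U *ᵥ v) ⬝ᵥ (U *ᵥ v) = (Uᵀ *ᵥ (U *ᵥ v)) ⬝ᵥ v := by
        rw [Matrix.dotProduct_mulVec, Matrix.mulVec_transpose]
    _ = v ⬝ᵥ v := by rw [Matrix.mulVec_mulVec, hU, Matrix.one_mulVec]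

lemma nv_unit {U : Matrix m n ℝ} (hU : Uᵀ * U = 1) (v : n → ℝ) :
    nv (U *ᵥ v) = nv v := by
  rw [nv_eq_sqrt, nv_eq_sqrt, nvsq_unit hU]

/-- zero-padding of a `Fin q` vector to `ℕ`. -/
def pad {q : ℕ} (w : Fin q → ℝ) : ℕ → ℝ := fun k => if h : k < q then w ⟨k, h⟩ else 0

lemma pad_coe {q : ℕ} (w : Fin q → ℝ) (i : Fin q) : pad w (i : ℕ) = w i := by
  simp [pad, i.isLt]

lemma sum_sq_pad {q : ℕ} (w : Fin q → ℝ) :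
    ∑ i, w i ^ 2 = ∑ k ∈ Finset.range q, pad w k ^ 2 := by
  rw [← Fin.sum_univ_eq_sum_range (fun k => pad w k ^ 2) q]
  exact Finset.sum_congr rfl fun i _ => by rw [pad_coe]

lemma sum_range_of_zero_outside {p q : ℕ} (f : ℕ → ℝ) (hf : ∀ k, q ≤ k → f k = 0) :
    ∑ k ∈ Finset.range p, f k = ∑ k ∈ Finset.range (min p q), f k := by
  refine (Finset.sum_subset (Finset.range_subset_range.2 (min_le_left p q)) ?_).symm
  intro k hk hk2
  simp only [Finset.mem_range] at hk hk2
  exact hf k (by omega)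

lemma rectDiag_mulVec {p q : ℕ} (σ : ℕ → ℝ) (w : Fin q → ℝ) (i : Fin p) :
    (rectDiag p q σ *ᵥ w) i = σ (i : ℕ) * pad w (i : ℕ) := by
  by_cases h : (i : ℕ) < q
  · rw [Matrix.mulVec, dotProduct, Finset.sum_eq_single (⟨(i : ℕ), h⟩ : Fin q)]
    · simp [rectDiag, pad, h]
    · intro j _ hj
      have : (i : ℕ) ≠ (j : ℕ) := fun hc => hj (by ext; simp [← hc])
      simp [rectDiag, this]
    · simp
  · have : ∀ j : Fin q, rectDiag p q σ i j * w j = 0 := by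
      intro j
      have : (i : ℕ) ≠ (j : ℕ) := by omega
      simp [rectDiag, this]
    simp [Matrix.mulVec, dotProduct, this, pad, h]

lemma nvsq_rectDiag_mulVec {p q : ℕ} (σ : ℕ → ℝ) (w : Fin q → ℝ) :
    ∑ i, (rectDiag p q σ *ᵥ w) i ^ 2
      = ∑ k ∈ Finset.range (min p q), (σ k * pad w k) ^ 2 := by
  have h1 : ∑ i, (rectDiag p q σ *ᵥ w) i ^ 2 = ∑ i : Fin p, (σ (i:ℕ) * pad w (i:ℕ)) ^ 2 :=
    Finset.sum_congr rfl fun i _ => by rw [rectDiag_mulVec]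
  rw [h1, Fin.sum_univ_eq_sum_range (fun k => (σ k * pad w k) ^ 2) p]
  exact sum_range_of_zero_outside _ fun k hk => by simp [pad, not_lt.2 hk]

lemma nv_rectDiag_mulVec_le {p q : ℕ} {σ : ℕ → ℝ} {c : ℝ} (hc : 0 ≤ c)
    (hσ : ∀ k, k < min p q → |σ k| ≤ c) (w : Fin q → ℝ) :
    nv (rectDiag p q σ *ᵥ w) ≤ c * nv w := by
  refine nv_le_of_sq_le hc ?_
  rw [nvsq_rectDiag_mulVec, sum_sq_pad, Finset.mul_sum]
  calc ∑ k ∈ Finset.range (min p q), (σ k * pad w k) ^ 2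
      ≤ ∑ k ∈ Finset.range (min p q), c ^ 2 * pad w k ^ 2 := by
        refine Finset.sum_le_sum fun k hk => ?_
        have := hσ k (Finset.mem_range.1 hk)
        rw [mul_pow]
        have h2 : σ k ^ 2 ≤ c ^ 2 := by nlinarith [abs_nonneg (σ k), le_abs_self (σ k), neg_abs_le (σ k)]
        nlinarith [sq_nonneg (pad w k)]
    _ ≤ ∑ k ∈ Finset.range q, c ^ 2 * pad w k ^ 2 := by
        refine Finset.sum_le_sum_of_subset_of_nonneg
          (Finset.range_subset_range.2 (min_le_right p q)) fun k _ _ => by positivity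

/-- The sandwich bound: `opNorm (U * B * Vᵀ) ≤ c`. -/
lemma opNorm_sandwich_le {p q : ℕ} {U : Matrix (Fin p) (Fin p) ℝ} {V : Matrix (Fin q) (Fin q) ℝ}
    {B : Matrix (Fin p) (Fin q) ℝ} {c : ℝ} (hU : Uᵀ * U = 1) (hV : V * Vᵀ = 1) (hc : 0 ≤ c)
    (hB : ∀ x, nv (B *ᵥ x) ≤ c * nv x) : opNorm (U * B * Vᵀ) ≤ c := by
  refine opNorm_le_of _ hc (fun x => ?_)
  have hVt : (Vᵀ)ᵀ * Vᵀ = 1 := by rw [Matrix.transpose_transpose, hV]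
  rw [← Matrix.mulVec_mulVec, ← Matrix.mulVec_mulVec, nv_unit hU, ← nv_unit hVt x]
  exact hB _

lemma opNorm_rectDiag_sandwich_le {p q : ℕ} {U : Matrix (Fin p) (Fin p) ℝ}
    {V : Matrix (Fin q) (Fin q) ℝ} {σ : ℕ → ℝ} {c : ℝ}
    (hU : Uᵀ * U = 1) (hV : V * Vᵀ = 1) (hc : 0 ≤ c)
    (hσ : ∀ k, k < min p q → |σ k| ≤ c) : opNorm (U * rectDiag p q σ * Vᵀ) ≤ c :=
  opNorm_sandwich_le hU hV hc (nv_rectDiag_mulVec_le hc hσ)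


lemma frobSq_nonneg (A : Matrix m n ℝ) : 0 ≤ frobSq A := by
  unfold frobSq; positivity

lemma frobSq_eq_sum_cols (A : Matrix m n ℝ) : frobSq A = ∑ j, ∑ i, (A i j) ^ 2 :=
  Finset.sum_comm

lemma frobSq_transpose (A : Matrix m n ℝ) : frobSq Aᵀ = frobSq A := by
  rw [frobSq, frobSq_eq_sum_cols]
  rfl

lemma frobSq_unit_mul {U : Matrix m m ℝ} (hU : Uᵀ * U = 1) (A : Matrix m n ℝ) :
    frobSq (U * A) = frobSq A := by
  rw [frobSq_eq_sum_cols, frobSq_eq_sum_cols]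
  refine Finset.sum_congr rfl fun j _ => ?_
  have hcol : ∀ i, (U * A) i j = (U *ᵥ fun k => A k j) i := by
    intro i; simp [Matrix.mul_apply, Matrix.mulVec, dotProduct]
  calc ∑ i, ((U * A) i j) ^ 2 = ∑ i, ((U *ᵥ fun k => A k j) i) ^ 2 :=
        Finset.sum_congr rfl fun i _ => by rw [hcol]
    _ = ∑ i, (A i j) ^ 2 := nvsq_unit hU _

lemma frobSq_mul_unit {V : Matrix n n ℝ} (hV : Vᵀ * V = 1) (A : Matrix m n ℝ) :
    frobSq (A * Vᵀ) = frobSq A := by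
  rw [← frobSq_transpose (A * Vᵀ), Matrix.transpose_mul, Matrix.transpose_transpose,
    frobSq_unit_mul hV, frobSq_transpose]

lemma frobSq_unit_sandwich {U : Matrix m m ℝ} {V : Matrix n n ℝ}
    (hU : Uᵀ * U = 1) (hV : Vᵀ * V = 1) (A : Matrix m n ℝ) :
    frobSq (U * A * Vᵀ) = frobSq A := by
  rw [frobSq_mul_unit hV, frobSq_unit_mul hU]

lemma frobSq_add_le (A B : Matrix m n ℝ) :
    frobSq (A + B) ≤ 2 * frobSq A + 2 * frobSq B := by
  simp only [frobSq, Finset.mul_sum, ← Finset.sum_add_distrib]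
  refine Finset.sum_le_sum fun i _ => Finset.sum_le_sum fun j _ => ?_
  simp only [Matrix.add_apply]
  nlinarith [sq_nonneg (A i j - B i j)]

lemma frobSq_neg (A : Matrix m n ℝ) : frobSq (-A) = frobSq A := by
  simp [frobSq]

lemma frobSq_mul_le (G : Matrix m k ℝ) (H : Matrix k n ℝ) :
    frobSq (G * H) ≤ opNorm G ^ 2 * frobSq H := by
  rw [frobSq_eq_sum_cols, frobSq_eq_sum_cols, Finset.mul_sum]
  refine Finset.sum_le_sum fun j _ => ?_
  have hcol : ∀ i, (G * H) i j = (G *ᵥ fun t => H t j) i := by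
    intro i; simp [Matrix.mul_apply, Matrix.mulVec, dotProduct]
  calc ∑ i, ((G * H) i j) ^ 2 = ∑ i, ((G *ᵥ fun t => H t j) i) ^ 2 :=
        Finset.sum_congr rfl fun i _ => by rw [hcol]
    _ ≤ opNorm G ^ 2 * ∑ t, (H t j) ^ 2 := by
        have h := mulVec_nv_le G (fun t => H t j)
        have h2 : nv (G *ᵥ fun t => H t j) ^ 2 ≤ (opNorm G * nv fun t => H t j) ^ 2 := by
          have := nv_nonneg (G *ᵥ fun t => H t j)
          nlinarith
        rw [nv_sq, mul_pow, nv_sq] at h2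
        exact h2

lemma frobSq_rectDiag {p q : ℕ} (σ : ℕ → ℝ) :
    frobSq (rectDiag p q σ) = ∑ k ∈ Finset.range (min p q), σ k ^ 2 := by
  have h : ∀ i : Fin p, ∑ j : Fin q, (rectDiag p q σ i j) ^ 2
      = if (i : ℕ) < q then σ (i : ℕ) ^ 2 else 0 := by
    intro i
    by_cases h : (i : ℕ) < q
    · rw [Finset.sum_eq_single (⟨(i : ℕ), h⟩ : Fin q)]
      · simp [rectDiag, h]
      · intro j _ hj
        have : (i : ℕ) ≠ (j : ℕ) := fun hc => hj (by ext; simp [← hc])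
        simp [rectDiag, this]
      · simp
    · rw [if_neg h]
      refine Finset.sum_eq_zero fun j _ => ?_
      have : (i : ℕ) ≠ (j : ℕ) := by omega
      simp [rectDiag, this]
  rw [frobSq]
  calc ∑ i : Fin p, ∑ j, (rectDiag p q σ i j) ^ 2
      = ∑ i : Fin p, (if (i : ℕ) < q then σ (i : ℕ) ^ 2 else 0) :=
        Finset.sum_congr rfl fun i _ => h i
    _ = ∑ k ∈ Finset.range p, (if k < q then σ k ^ 2 else 0) :=
        Fin.sum_univ_eq_sum_range (fun k => if k < q then σ k ^ 2 else 0) p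
    _ = ∑ k ∈ Finset.range (min p q), (if k < q then σ k ^ 2 else 0) :=
        sum_range_of_zero_outside _ fun k hk => by simp [not_lt.2 hk]
    _ = ∑ k ∈ Finset.range (min p q), σ k ^ 2 := by
        refine Finset.sum_congr rfl fun k hk => ?_
        rw [if_pos (by simp only [Finset.mem_range] at hk; omega)]

lemma frobSq_diagonal_mul (d : m → ℝ) (K : Matrix m n ℝ) :
    frobSq (Matrix.diagonal d * K) = ∑ i, d i ^ 2 * ∑ j, (K i j) ^ 2 := by
  rw [frobSq]
  refine Finset.sum_congr rfl fun i _ => ?_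
  rw [Finset.mul_sum]
  refine Finset.sum_congr rfl fun j _ => ?_
  rw [Matrix.diagonal_mul, mul_pow]


lemma le_nv_of_sq_le {a : m → ℝ} {b : n → ℝ} {c : ℝ} (hc : 0 ≤ c)
    (h : c ^ 2 * ∑ i, b i ^ 2 ≤ ∑ i, a i ^ 2) : c * nv b ≤ nv a := by
  rw [nv_eq_sqrt, nv_eq_sqrt]
  calc c * Real.sqrt (∑ i, b i ^ 2) = Real.sqrt (c ^ 2 * ∑ i, b i ^ 2) := by
        rw [Real.sqrt_mul (by positivity), Real.sqrt_sq hc]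
    _ ≤ Real.sqrt (∑ i, a i ^ 2) := Real.sqrt_le_sqrt h

lemma nv_pos {x : n → ℝ} (hx : x ≠ 0) : 0 < nv x := by
  rw [nv, norm_pos_iff]
  intro hc
  exact hx (by simpa using congrArg (WithLp.equiv 2 (n → ℝ)) hc)

/-- Weyl-type inequality: `σY k ≤ σX k + ‖Z‖` for `k < min p₁ p₂`. -/
lemma weyl {p₁ p₂ : ℕ} {X Z : Matrix (Fin p₁) (Fin p₂) ℝ}
    {U : Matrix (Fin p₁) (Fin p₁) ℝ} {V : Matrix (Fin p₂) (Fin p₂) ℝ} {σY : ℕ → ℝ}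
    {UX : Matrix (Fin p₁) (Fin p₁) ℝ} {VX : Matrix (Fin p₂) (Fin p₂) ℝ} {σX : ℕ → ℝ}
    (hU1 : Uᵀ * U = 1) (hV2 : V * Vᵀ = 1)
    (hσY : Antitone σY) (hσY0 : ∀ k, 0 ≤ σY k)
    (hY : X + Z = U * rectDiag p₁ p₂ σY * Vᵀ)
    (hUX1 : UXᵀ * UX = 1) (hVX2 : VX * VXᵀ = 1)
    (hσX : Antitone σX) (hσX0 : ∀ k, 0 ≤ σX k)
    (hX : X = UX * rectDiag p₁ p₂ σX * VXᵀ)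
    {k0 : ℕ} (hk0 : k0 < min p₁ p₂) :
    σY k0 ≤ σX k0 + opNorm Z := by
  have hk0p₂ : k0 < p₂ := lt_of_lt_of_le hk0 (min_le_right _ _)
  -- build the constraint matrix and get a nonzero kernel vector
  set B : Matrix (Fin p₂) (Fin p₂) ℝ := Matrix.of fun i j =>
    if (i : ℕ) < k0 then VXᵀ i j else if (i : ℕ) = k0 then 0 else Vᵀ i j with hB
  have hdet : B.det = 0 := by
    refine Matrix.det_eq_zero_of_row_eq_zero (⟨k0, hk0p₂⟩ : Fin p₂) fun j => ?_
    simp [hB]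
  obtain ⟨x, hx0, hBx⟩ := Matrix.exists_mulVec_eq_zero_iff.mpr hdet
  set w := Vᵀ *ᵥ x with hwdef
  set u := VXᵀ *ᵥ x with hudef
  have hw : ∀ i : Fin p₂, k0 < (i : ℕ) → w i = 0 := by
    intro i hi
    have h0 : (B *ᵥ x) i = 0 := by rw [hBx]; rfl
    have : (B *ᵥ x) i = w i := by
      simp only [Matrix.mulVec, dotProduct, hwdef, hB]
      refine Finset.sum_congr rfl fun j _ => ?_
      rw [Matrix.of_apply, if_neg (by omega), if_neg (by omega)]
    rw [← this, h0]
  have hu : ∀ i : Fin p₂, (i : ℕ) < k0 → u i = 0 := by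
    intro i hi
    have h0 : (B *ᵥ x) i = 0 := by rw [hBx]; rfl
    have : (B *ᵥ x) i = u i := by
      simp only [Matrix.mulVec, dotProduct, hudef, hB]
      refine Finset.sum_congr rfl fun j _ => ?_
      rw [Matrix.of_apply, if_pos hi]
    rw [← this, h0]
  have hVt : (Vᵀ)ᵀ * Vᵀ = 1 := by rw [Matrix.transpose_transpose, hV2]
  have hVXt : (VXᵀ)ᵀ * VXᵀ = 1 := by rw [Matrix.transpose_transpose, hVX2]
  have hnw : ∑ i, w i ^ 2 = ∑ i, x i ^ 2 := nvsq_unit hVt x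
  have hnu : ∑ i, u i ^ 2 = ∑ i, x i ^ 2 := nvsq_unit hVXt x
  -- lower bound for ‖(X+Z)x‖
  have hYlow : σY k0 * nv x ≤ nv ((X + Z) *ᵥ x) := by
    have hYx : (X + Z) *ᵥ x = U *ᵥ (rectDiag p₁ p₂ σY *ᵥ w) := by
      rw [hY, ← Matrix.mulVec_mulVec, ← Matrix.mulVec_mulVec]
    rw [hYx, nv_unit hU1]
    refine le_nv_of_sq_le (hσY0 k0) ?_
    rw [nvsq_rectDiag_mulVec]
    have hpadw : ∀ k, k0 < k → pad w k = 0 := by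
      intro k hk
      by_cases h : k < p₂
      · have := hw ⟨k, h⟩ hk
        simpa [pad, h] using this
      · simp [pad, h]
    have e1 : ∑ k ∈ Finset.range p₂, pad w k ^ 2 = ∑ k ∈ Finset.range (k0 + 1), pad w k ^ 2 := by
      refine (Finset.sum_subset (Finset.range_subset_range.2 (by omega)) ?_).symm
      intro k hk hk2
      simp only [Finset.mem_range] at hk hk2
      rw [hpadw k (by omega)]
      ring
    have e2 : ∑ i, x i ^ 2 = ∑ k ∈ Finset.range (k0 + 1), pad w k ^ 2 := by
      rw [← hnw, sum_sq_pad, e1]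
    rw [e2, Finset.mul_sum]
    calc ∑ k ∈ Finset.range (k0 + 1), σY k0 ^ 2 * pad w k ^ 2
        ≤ ∑ k ∈ Finset.range (k0 + 1), (σY k * pad w k) ^ 2 := by
          refine Finset.sum_le_sum fun k hk => ?_
          have hk' : k ≤ k0 := by simp only [Finset.mem_range] at hk; omega
          have h1 : σY k0 ≤ σY k := hσY hk'
          have h2 := hσY0 k0
          rw [mul_pow]
          exact mul_le_mul_of_nonneg_right (pow_le_pow_left₀ h2 h1 2) (sq_nonneg _)
      _ ≤ ∑ k ∈ Finset.range (min p₁ p₂), (σY k * pad w k) ^ 2 := by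
          refine Finset.sum_le_sum_of_subset_of_nonneg
            (Finset.range_subset_range.2 (by omega)) fun k _ _ => by positivity
  -- upper bound for ‖X x‖
  have hXup : nv (X *ᵥ x) ≤ σX k0 * nv x := by
    have hXx : X *ᵥ x = UX *ᵥ (rectDiag p₁ p₂ σX *ᵥ u) := by
      rw [hX, ← Matrix.mulVec_mulVec, ← Matrix.mulVec_mulVec]
    rw [hXx, nv_unit hUX1]
    refine nv_le_of_sq_le (hσX0 k0) ?_
    rw [nvsq_rectDiag_mulVec]
    have hpadu : ∀ k, k < k0 → pad u k = 0 := by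
      intro k hk
      have hkp : k < p₂ := by omega
      have := hu ⟨k, hkp⟩ hk
      simpa [pad, hkp] using this
    have e2 : ∑ i, x i ^ 2 = ∑ k ∈ Finset.range p₂, pad u k ^ 2 := by
      rw [← hnu, sum_sq_pad]
    rw [e2, Finset.mul_sum]
    calc ∑ k ∈ Finset.range (min p₁ p₂), (σX k * pad u k) ^ 2
        ≤ ∑ k ∈ Finset.range (min p₁ p₂), σX k0 ^ 2 * pad u k ^ 2 := by
          refine Finset.sum_le_sum fun k hk => ?_
          by_cases hkk : k < k0
          · rw [hpadu k hkk]
            simp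
          · have h1 : σX k ≤ σX k0 := hσX (by omega)
            have h2 := hσX0 k
            rw [mul_pow]
            exact mul_le_mul_of_nonneg_right (pow_le_pow_left₀ h2 h1 2) (sq_nonneg _)
      _ ≤ ∑ k ∈ Finset.range p₂, σX k0 ^ 2 * pad u k ^ 2 :=
          Finset.sum_le_sum_of_subset_of_nonneg
            (Finset.range_subset_range.2 (min_le_right _ _)) fun k _ _ => by positivity
  -- combine
  have hZx : nv (Z *ᵥ x) ≤ opNorm Z * nv x := mulVec_nv_le Z x
  have htri : nv ((X + Z) *ᵥ x) ≤ nv (X *ᵥ x) + nv (Z *ᵥ x) := by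
    rw [Matrix.add_mulVec]
    exact nv_add_le _ _
  have hxpos : 0 < nv x := nv_pos hx0
  have : σY k0 * nv x ≤ (σX k0 + opNorm Z) * nv x := by
    calc σY k0 * nv x ≤ nv ((X + Z) *ᵥ x) := hYlow
      _ ≤ nv (X *ᵥ x) + nv (Z *ᵥ x) := htri
      _ ≤ σX k0 * nv x + opNorm Z * nv x := add_le_add hXup hZx
      _ = (σX k0 + opNorm Z) * nv x := by ring
  exact le_of_mul_le_mul_right this hxpos


lemma rectDiag_sub {p q : ℕ} (f g : ℕ → ℝ) :
    rectDiag p q f - rectDiag p q g = rectDiag p q (fun k => f k - g k) := by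
  ext i j
  by_cases h : (i : ℕ) = (j : ℕ) <;> simp [rectDiag, h]

lemma sandwich_sub {p q : ℕ} (U : Matrix (Fin p) (Fin p) ℝ) (V : Matrix (Fin q) (Fin q) ℝ)
    (f g : ℕ → ℝ) :
    U * rectDiag p q f * V - U * rectDiag p q g * V
      = U * rectDiag p q (fun k => f k - g k) * V := by
  rw [← Matrix.sub_mul, ← Matrix.mul_sub, rectDiag_sub]

lemma rectDiag_transpose {p q : ℕ} (σ : ℕ → ℝ) :
    (rectDiag p q σ)ᵀ = rectDiag q p σ := by
  ext i j
  by_cases h : (i : ℕ) = (j : ℕ)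
  · simp [rectDiag, h]
  · have h' : ¬ (j : ℕ) = (i : ℕ) := fun hc => h hc.symm
    simp [rectDiag, h, h']

lemma sum_fin_ite_const {p s : ℕ} (hs : s ≤ p) (c : ℝ) :
    ∑ i : Fin p, (if (i : ℕ) < s then c else 0) = s * c := by
  rw [Fin.sum_univ_eq_sum_range (fun k => if k < s then c else 0) p]
  rw [← Finset.sum_filter]
  have : (Finset.range p).filter (fun k => k < s) = Finset.range s := by
    ext k
    simp only [Finset.mem_filter, Finset.mem_range]
    omega
  rw [this, Finset.sum_const, Finset.card_range, nsmul_eq_mul]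

lemma nv_diagonal_mulVec_le {e : n → ℝ} {c : ℝ} (hc : 0 ≤ c) (he : ∀ i, |e i| ≤ c)
    (x : n → ℝ) : nv (Matrix.diagonal e *ᵥ x) ≤ c * nv x := by
  refine nv_le_of_sq_le hc ?_
  rw [Finset.mul_sum]
  refine Finset.sum_le_sum fun i _ => ?_
  rw [Matrix.mulVec_diagonal, mul_pow]
  have h2 : e i ^ 2 ≤ c ^ 2 := by
    have := he i
    nlinarith [abs_nonneg (e i), le_abs_self (e i), neg_abs_le (e i)]
  nlinarith [sq_nonneg (x i)]


lemma opNorm_neg (A : Matrix m n ℝ) : opNorm (-A) = opNorm A := by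
  rw [opNorm, opNorm, map_neg, map_neg, norm_neg]

lemma sandwich_transpose {p q : ℕ} (U : Matrix (Fin p) (Fin p) ℝ)
    (V : Matrix (Fin q) (Fin q) ℝ) (σ : ℕ → ℝ) :
    (U * rectDiag p q σ * Vᵀ)ᵀ = V * rectDiag q p σ * Uᵀ := by
  rw [Matrix.transpose_mul, Matrix.transpose_mul, Matrix.transpose_transpose,
    rectDiag_transpose, ← Matrix.mul_assoc]

end SVT

set_option maxHeartbeats 1600000 in
open SVT in
/-- Soft singular value thresholding bound: if `Y = X + Z` and `γ ≥ 1.01‖Z‖_op`, then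
`‖T_γ(Y) - X‖_F² ≤ C ∑_k min{γ², σ_k(X)²}` for an absolute constant `C > 0`.
The SVDs of `Y` and of `X` are provided through orthogonal factors and non-increasing,
nonnegative singular value sequences. -/
theorem soft_svt_bound :
    ∃ C : ℝ, 0 < C ∧
      ∀ (p₁ p₂ : ℕ) (X Z : Matrix (Fin p₁) (Fin p₂) ℝ)
        (U : Matrix (Fin p₁) (Fin p₁) ℝ) (V : Matrix (Fin p₂) (Fin p₂) ℝ)
        (σY : ℕ → ℝ)
        (UX : Matrix (Fin p₁) (Fin p₁) ℝ) (VX : Matrix (Fin p₂) (Fin p₂) ℝ)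
        (σX : ℕ → ℝ) (γ : ℝ),
        Uᵀ * U = 1 → U * Uᵀ = 1 → Vᵀ * V = 1 → V * Vᵀ = 1 →
        Antitone σY → (∀ k, 0 ≤ σY k) →
        X + Z = U * rectDiag p₁ p₂ σY * Vᵀ →
        UXᵀ * UX = 1 → UX * UXᵀ = 1 → VXᵀ * VX = 1 → VX * VXᵀ = 1 →
        Antitone σX → (∀ k, 0 ≤ σX k) →
        X = UX * rectDiag p₁ p₂ σX * VXᵀ →
        1.01 * opNorm Z ≤ γ →
        frobSq (U * rectDiag p₁ p₂ (fun k => max 0 (σY k - γ)) * Vᵀ - X)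
          ≤ C * ∑ k ∈ Finset.range (min p₁ p₂), min (γ ^ 2) (σX k ^ 2) := by
  classical
  refine ⟨500000, by norm_num, ?_⟩
  intro p₁ p₂ X Z U V σY UX VX σX γ hU1 hU2 hV1 hV2 hσY hσY0 hY hUX1 hUX2 hVX1 hVX2 hσX hσX0 hX hγ
  have hZ0 : 0 ≤ opNorm Z := opNorm_nonneg Z
  have hγ0 : 0 ≤ γ := le_trans (by linarith) hγ
  have hZγ : opNorm Z ≤ 100 / 101 * γ := by nlinarith
  have hZγ1 : opNorm Z ≤ γ := by linarith
  -- cut points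
  have hrex : ∃ k, k = min p₁ p₂ ∨ σX k ≤ γ := ⟨min p₁ p₂, Or.inl rfl⟩
  set r := Nat.find hrex with hrdef
  have hrm : r ≤ min p₁ p₂ := Nat.find_le (Or.inl rfl)
  have hr1 : ∀ k, k < r → γ < σX k := by
    intro k hk
    have h := Nat.find_min hrex hk
    push_neg at h
    exact h.2
  have hr2 : ∀ k, r ≤ k → k < min p₁ p₂ → σX k ≤ γ := by
    intro k hk hkm
    rcases Nat.find_spec hrex with h | h
    · omega
    · exact le_trans (hσX hk) h
  have hsex : ∃ k, k = min p₁ p₂ ∨ σY k ≤ γ := ⟨min p₁ p₂, Or.inl rfl⟩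
  set s := Nat.find hsex with hsdef
  have hsm : s ≤ min p₁ p₂ := Nat.find_le (Or.inl rfl)
  have hs1 : ∀ k, k < s → γ < σY k := by
    intro k hk
    have h := Nat.find_min hsex hk
    push_neg at h
    exact h.2
  have hs2 : ∀ k, s ≤ k → k < min p₁ p₂ → σY k ≤ γ := by
    intro k hk hkm
    rcases Nat.find_spec hsex with h | h
    · omega
    · exact le_trans (hσY hk) h
  have hweyl : ∀ k, k < min p₁ p₂ → σY k ≤ σX k + opNorm Z := fun k hk =>
    weyl hU1 hV2 hσY hσY0 hY hUX1 hVX2 hσX hσX0 hX hk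
  -- abbreviations (as plain defs via `set`)
  set σt : ℕ → ℝ := fun k => max 0 (σY k - γ) with hσt
  set σr : ℕ → ℝ := fun k => if k < r then σX k else 0 with hσr
  set T : Matrix (Fin p₁) (Fin p₂) ℝ := U * rectDiag p₁ p₂ σt * Vᵀ with hT
  set Xr : Matrix (Fin p₁) (Fin p₂) ℝ := UX * rectDiag p₁ p₂ σr * VXᵀ with hXr
  set E : Matrix (Fin p₁) (Fin p₁) ℝ :=
    Matrix.diagonal (fun i : Fin p₁ => if (i : ℕ) < s then (1 : ℝ) else 0) with hE
  set P : Matrix (Fin p₁) (Fin p₁) ℝ := U * E * Uᵀ with hP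
  set M : Matrix (Fin p₁) (Fin p₂) ℝ := T - Xr with hM
  set S : ℝ := ∑ k ∈ Finset.range (min p₁ p₂), min (γ ^ 2) (σX k ^ 2) with hS
  -- singular value gap bounds
  have hg1 : ∀ k, |σt k - σY k| ≤ γ := by
    intro k
    rcases le_or_gt (σY k) γ with h | h
    · rw [hσt]
      simp only
      rw [max_eq_left (by linarith), zero_sub, abs_neg, abs_of_nonneg (hσY0 k)]
      exact h
    · rw [hσt]
      simp only
      rw [max_eq_right (by linarith)]
      rw [show σY k - γ - σY k = -γ by ring, abs_neg, abs_of_nonneg hγ0]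
  have hg2 : ∀ k, k < min p₁ p₂ → |σX k - σr k| ≤ γ := by
    intro k hk
    rw [hσr]
    simp only
    by_cases hkr : k < r
    · rw [if_pos hkr, sub_self, abs_zero]
      exact hγ0
    · rw [if_neg hkr, sub_zero, abs_of_nonneg (hσX0 k)]
      exact hr2 k (by omega) hk
  -- decomposition of M
  have hMdecomp : M = U * rectDiag p₁ p₂ (fun k => σt k - σY k) * Vᵀ + Z
      + UX * rectDiag p₁ p₂ (fun k => σX k - σr k) * VXᵀ := by
    have e1 : U * rectDiag p₁ p₂ (fun k => σt k - σY k) * Vᵀ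
        = T - U * rectDiag p₁ p₂ σY * Vᵀ := by
      rw [hT, sandwich_sub]
    have e2 : UX * rectDiag p₁ p₂ (fun k => σX k - σr k) * VXᵀ = X - Xr := by
      rw [hXr, hX, sandwich_sub]
    rw [e1, e2, hM, ← hY]
    abel
  have hopM : opNorm M ≤ 3 * γ := by
    rw [hMdecomp]
    have h1 : opNorm (U * rectDiag p₁ p₂ (fun k => σt k - σY k) * Vᵀ) ≤ γ :=
      opNorm_rectDiag_sandwich_le hU1 hV2 hγ0 (fun k _ => hg1 k)
    have h2 : opNorm (UX * rectDiag p₁ p₂ (fun k => σX k - σr k) * VXᵀ) ≤ γ :=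
      opNorm_rectDiag_sandwich_le hUX1 hVX2 hγ0 hg2
    calc opNorm (U * rectDiag p₁ p₂ (fun k => σt k - σY k) * Vᵀ + Z
          + UX * rectDiag p₁ p₂ (fun k => σX k - σr k) * VXᵀ)
        ≤ opNorm (U * rectDiag p₁ p₂ (fun k => σt k - σY k) * Vᵀ + Z)
          + opNorm (UX * rectDiag p₁ p₂ (fun k => σX k - σr k) * VXᵀ) := opNorm_add_le _ _
      _ ≤ opNorm (U * rectDiag p₁ p₂ (fun k => σt k - σY k) * Vᵀ) + opNorm Z
          + opNorm (UX * rectDiag p₁ p₂ (fun k => σX k - σr k) * VXᵀ) := by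
          have := opNorm_add_le (U * rectDiag p₁ p₂ (fun k => σt k - σY k) * Vᵀ) Z
          linarith
      _ ≤ 3 * γ := by linarith
  have hopMt : opNorm Mᵀ ≤ 3 * γ := by
    rw [hMdecomp, Matrix.transpose_add, Matrix.transpose_add,
      sandwich_transpose, sandwich_transpose]
    have h1 : opNorm (V * rectDiag p₂ p₁ (fun k => σt k - σY k) * Uᵀ) ≤ γ :=
      opNorm_rectDiag_sandwich_le hV1 hU2 hγ0 (fun k _ => hg1 k)
    have h2 : opNorm (VX * rectDiag p₂ p₁ (fun k => σX k - σr k) * UXᵀ) ≤ γ :=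
      opNorm_rectDiag_sandwich_le hVX1 hUX2 hγ0 (fun k hk => hg2 k (by omega))
    have h3 : opNorm Zᵀ ≤ γ := le_trans (opNorm_transpose_le Z) hZγ1
    calc opNorm (V * rectDiag p₂ p₁ (fun k => σt k - σY k) * Uᵀ + Zᵀ
          + VX * rectDiag p₂ p₁ (fun k => σX k - σr k) * UXᵀ)
        ≤ opNorm (V * rectDiag p₂ p₁ (fun k => σt k - σY k) * Uᵀ + Zᵀ)
          + opNorm (VX * rectDiag p₂ p₁ (fun k => σX k - σr k) * UXᵀ) := opNorm_add_le _ _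
      _ ≤ 3 * γ := by
          have := opNorm_add_le (V * rectDiag p₂ p₁ (fun k => σt k - σY k) * Uᵀ) Zᵀ
          linarith
  -- nonnegativity of S
  have hS0 : 0 ≤ S := by
    rw [hS]
    refine Finset.sum_nonneg fun k _ => le_min (by positivity) (by positivity)
  -- the tail bound
  have hXrX : frobSq (Xr - X) ≤ S := by
    have e : Xr - X = UX * rectDiag p₁ p₂ (fun k => σr k - σX k) * VXᵀ := by
      rw [hXr, hX, sandwich_sub]
    rw [e, frobSq_unit_sandwich hUX1 hVX1, frobSq_rectDiag, hS]
    refine Finset.sum_le_sum fun k hk => ?_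
    have hkm : k < min p₁ p₂ := Finset.mem_range.1 hk
    rw [hσr]
    simp only
    by_cases hkr : k < r
    · rw [if_pos hkr, sub_self, zero_pow (by norm_num : 2 ≠ 0)]
      exact le_min (sq_nonneg _) (sq_nonneg _)
    · rw [if_neg hkr, zero_sub, neg_sq]
      exact le_min (pow_le_pow_left₀ (hσX0 k) (hr2 k (by omega) hkm) 2) le_rfl
  -- the projector kills the thresholded part
  have hEDt : E * rectDiag p₁ p₂ σt = rectDiag p₁ p₂ σt := by
    ext i j
    rw [hE, Matrix.diagonal_mul]
    by_cases hi : (i : ℕ) < s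
    · rw [if_pos hi, one_mul]
    · rw [if_neg hi, zero_mul]
      by_cases hij : (i : ℕ) = (j : ℕ)
      · have him : (i : ℕ) < min p₁ p₂ := by
          have := i.isLt
          have := j.isLt
          omega
        have : σt (i : ℕ) = 0 := by
          rw [hσt]
          simp only
          rw [max_eq_left (by linarith [hs2 (i : ℕ) (by omega) him])]
        have hj : σt (j : ℕ) = 0 := hij ▸ this
        simp [rectDiag, hij, hj]
      · simp [rectDiag, hij]
  have hPT : P * T = T := by
    rw [hP, hT]
    have e : (U * E * Uᵀ) * (U * rectDiag p₁ p₂ σt * Vᵀ)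
        = U * (E * ((Uᵀ * U) * (rectDiag p₁ p₂ σt * Vᵀ))) := by
      simp only [Matrix.mul_assoc]
    rw [e, hU1, Matrix.one_mul, ← Matrix.mul_assoc E (rectDiag p₁ p₂ σt) Vᵀ, hEDt,
      ← Matrix.mul_assoc]
  -- row-norm bound for P * M
  have hrow : ∀ i : Fin p₁, ∑ j, ((Uᵀ * M) i j) ^ 2 ≤ opNorm Mᵀ ^ 2 := by
    intro i
    have hv : ∀ j, (Uᵀ * M) i j = (Mᵀ *ᵥ fun t => U t i) j := by
      intro j
      simp [Matrix.mul_apply, Matrix.mulVec, dotProduct, mul_comm]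
    have e : ∑ j, ((Uᵀ * M) i j) ^ 2 = ∑ j, ((Mᵀ *ᵥ fun t => U t i) j) ^ 2 :=
      Finset.sum_congr rfl fun j _ => by rw [hv]
    have hcol : ∑ t, (U t i) ^ 2 = 1 := by
      have h := congrArg (fun A => A i i) hU1
      simp only [Matrix.mul_apply, Matrix.transpose_apply, Matrix.one_apply_eq] at h
      rw [← h]
      exact Finset.sum_congr rfl fun t _ => by ring
    have hb := mulVec_nv_le Mᵀ (fun t => U t i)
    have hb2 : nv (Mᵀ *ᵥ fun t => U t i) ^ 2 ≤ (opNorm Mᵀ * nv fun t => U t i) ^ 2 := by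
      have := nv_nonneg (Mᵀ *ᵥ fun t => U t i)
      nlinarith
    rw [nv_sq, mul_pow, nv_sq, hcol, mul_one] at hb2
    rw [e]
    exact hb2
  have hPMfrob : frobSq (P * M) ≤ (s : ℝ) * (9 * γ ^ 2) := by
    have e : P * M = U * (E * (Uᵀ * M)) := by
      rw [hP, Matrix.mul_assoc, Matrix.mul_assoc]
    rw [e, frobSq_unit_mul hU1, hE, frobSq_diagonal_mul]
    have step1 : ∑ i : Fin p₁, (if (i : ℕ) < s then (1:ℝ) else 0) ^ 2 * ∑ j, ((Uᵀ * M) i j) ^ 2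
        ≤ ∑ i : Fin p₁, (if (i : ℕ) < s then opNorm Mᵀ ^ 2 else 0) := by
      refine Finset.sum_le_sum fun i _ => ?_
      by_cases hi : (i : ℕ) < s
      · rw [if_pos hi, if_pos hi, one_pow, one_mul]
        exact hrow i
      · rw [if_neg hi, if_neg hi]
        rw [zero_pow (by norm_num), zero_mul]
    have step2 : ∑ i : Fin p₁, (if (i : ℕ) < s then opNorm Mᵀ ^ 2 else 0)
        = (s : ℝ) * opNorm Mᵀ ^ 2 :=
      sum_fin_ite_const (le_trans hsm (min_le_left _ _)) _
    have step3 : (s : ℝ) * opNorm Mᵀ ^ 2 ≤ (s : ℝ) * (9 * γ ^ 2) := by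
      refine mul_le_mul_of_nonneg_left ?_ (Nat.cast_nonneg s)
      have h9 : (3 * γ) ^ 2 = 9 * γ ^ 2 := by ring
      rw [← h9]
      exact pow_le_pow_left₀ (opNorm_nonneg _) hopMt 2
    linarith
  -- the residual part
  set F : Matrix (Fin p₂) (Fin p₂) ℝ :=
    Matrix.diagonal (fun j : Fin p₂ => if (j : ℕ) < r then (1 : ℝ) else 0) with hF
  set G : Matrix (Fin p₁) (Fin p₂) ℝ := (P - 1) * (UX * rectDiag p₁ p₂ σr) with hG
  have hDXrF : rectDiag p₁ p₂ σr * F = rectDiag p₁ p₂ σr := by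
    ext i j
    rw [hF, Matrix.mul_diagonal]
    by_cases hj : (j : ℕ) < r
    · rw [if_pos hj, mul_one]
    · rw [if_neg hj, mul_zero]
      by_cases hij : (i : ℕ) = (j : ℕ)
      · have : σr (i : ℕ) = 0 := by
          rw [hσr]
          simp only
          rw [if_neg (by omega)]
        have hj2 : σr (j : ℕ) = 0 := hij ▸ this
        simp [rectDiag, hij, hj2]
      · simp [rectDiag, hij]
  have hGF : G * (F * VXᵀ) = (P - 1) * Xr := by
    rw [hXr]
    have e1 : G * (F * VXᵀ) = (P - 1) * (UX * ((rectDiag p₁ p₂ σr * F) * VXᵀ)) := by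
      rw [hG]
      simp only [Matrix.mul_assoc]
    rw [e1, hDXrF, ← Matrix.mul_assoc UX (rectDiag p₁ p₂ σr) VXᵀ]
  have hG_VX : G = ((P - 1) * Xr) * VX := by
    rw [← hGF]
    have e2 : (G * (F * VXᵀ)) * VX = G * (F * (VXᵀ * VX)) := by
      simp only [Matrix.mul_assoc]
    rw [e2, hVX1, Matrix.mul_one]
    have e3 : G * F = (P - 1) * (UX * (rectDiag p₁ p₂ σr * F)) := by
      rw [hG]
      simp only [Matrix.mul_assoc]
    rw [e3, hDXrF, hG]
  have hopVX : opNorm VX ≤ 1 :=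
    opNorm_le_of _ zero_le_one fun x => by rw [nv_unit hVX1, one_mul]
  have hopP1 : opNorm (P - 1) ≤ 1 := by
    have e : U * (E - 1) * Uᵀ = P - 1 := by
      rw [Matrix.mul_sub, Matrix.mul_one, Matrix.sub_mul, hU2, hP]
    rw [← e]
    have eE : E - 1 = Matrix.diagonal (fun i : Fin p₁ => (if (i : ℕ) < s then (1:ℝ) else 0) - 1) := by
      rw [hE, ← Matrix.diagonal_one, Matrix.diagonal_sub]
    rw [eE]
    refine opNorm_sandwich_le hU1 hU2 zero_le_one
      (nv_diagonal_mulVec_le zero_le_one fun i => ?_)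
    by_cases hi : (i : ℕ) < s
    · rw [if_pos hi, sub_self, abs_zero]
      exact zero_le_one
    · rw [if_neg hi, zero_sub, abs_neg, abs_one]
  have hPT0 : (P - 1) * T = 0 := by
    rw [Matrix.sub_mul, Matrix.one_mul, hPT, sub_self]
  have hPXrM : (P - 1) * Xr = -((P - 1) * M) := by
    rw [hM, Matrix.mul_sub, hPT0, zero_sub, neg_neg]
  have hopG : opNorm G ≤ 3 * γ := by
    rw [hG_VX]
    calc opNorm (((P - 1) * Xr) * VX) ≤ opNorm ((P - 1) * Xr) * opNorm VX :=
          opNorm_mul_le _ _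
      _ ≤ opNorm ((P - 1) * Xr) * 1 :=
          mul_le_mul_of_nonneg_left hopVX (opNorm_nonneg _)
      _ = opNorm ((P - 1) * M) := by rw [mul_one, hPXrM, opNorm_neg]
      _ ≤ opNorm (P - 1) * opNorm M := opNorm_mul_le _ _
      _ ≤ 1 * (3 * γ) := by
          have h0 := opNorm_nonneg (P - 1)
          have h1 := opNorm_nonneg M
          nlinarith
      _ = 3 * γ := one_mul _
  have hFVfrob : frobSq (F * VXᵀ) = (r : ℝ) := by
    rw [hF, frobSq_diagonal_mul]
    have hrowV : ∀ j : Fin p₂, ∑ t, (VXᵀ j t) ^ 2 = 1 := by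
      intro j
      have h := congrArg (fun A => A j j) hVX1
      simp only [Matrix.mul_apply, Matrix.one_apply_eq] at h
      rw [← h]
      refine Finset.sum_congr rfl fun t _ => ?_
      rw [Matrix.transpose_apply, sq]
    have e : ∀ j : Fin p₂, (if (j : ℕ) < r then (1:ℝ) else 0) ^ 2 * ∑ t, (VXᵀ j t) ^ 2
        = if (j : ℕ) < r then (1:ℝ) else 0 := by
      intro j
      rw [hrowV j, mul_one]
      by_cases hj : (j : ℕ) < r
      · norm_num
      · norm_num
    rw [Finset.sum_congr rfl fun j _ => e j,
      sum_fin_ite_const (le_trans hrm (min_le_right _ _)) 1, mul_one]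
  have hNfrob : frobSq (M - P * M) ≤ 9 * ((r : ℝ) * γ ^ 2) := by
    have hNeq : M - P * M = P * Xr - Xr := by
      rw [hM, Matrix.mul_sub, hPT]
      abel
    have hsub1 : P * Xr - Xr = (P - 1) * Xr := by
      rw [Matrix.sub_mul, Matrix.one_mul]
    rw [hNeq, hsub1, ← hGF]
    calc frobSq (G * (F * VXᵀ)) ≤ opNorm G ^ 2 * frobSq (F * VXᵀ) := frobSq_mul_le _ _
      _ = opNorm G ^ 2 * (r : ℝ) := by rw [hFVfrob]
      _ ≤ (3 * γ) ^ 2 * (r : ℝ) :=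
          mul_le_mul_of_nonneg_right (pow_le_pow_left₀ (opNorm_nonneg G) hopG 2)
            (Nat.cast_nonneg r)
      _ = 9 * ((r : ℝ) * γ ^ 2) := by ring
  have hMsplit : frobSq M ≤ 2 * frobSq (P * M) + 2 * frobSq (M - P * M) := by
    have e : M = P * M + (M - P * M) := by abel
    calc frobSq M = frobSq (P * M + (M - P * M)) := by rw [← e]
      _ ≤ 2 * frobSq (P * M) + 2 * frobSq (M - P * M) := frobSq_add_le _ _
  have hTXsplit : frobSq (T - X) ≤ 2 * frobSq M + 2 * frobSq (Xr - X) := by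
    have e : T - X = M + (Xr - X) := by rw [hM]; abel
    rw [e]
    exact frobSq_add_le _ _
  have hrS : (r : ℝ) * γ ^ 2 ≤ S := by
    have e : ∀ k ∈ Finset.range r, γ ^ 2 = min (γ ^ 2) (σX k ^ 2) := by
      intro k hk
      have hk' := hr1 k (Finset.mem_range.1 hk)
      exact (min_eq_left (pow_le_pow_left₀ hγ0 hk'.le 2)).symm
    have e2 : (r : ℝ) * γ ^ 2 = ∑ k ∈ Finset.range r, min (γ ^ 2) (σX k ^ 2) := by
      rw [← Finset.sum_congr rfl e, Finset.sum_const, Finset.card_range, nsmul_eq_mul]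
    rw [e2, hS]
    exact Finset.sum_le_sum_of_subset_of_nonneg (Finset.range_subset_range.2 hrm)
      fun k _ _ => le_min (by positivity) (by positivity)
  have hsS : (s : ℝ) * γ ^ 2 ≤ 10201 * S := by
    have hterm : ∀ k ∈ Finset.range s, γ ^ 2 / 10201 ≤ min (γ ^ 2) (σX k ^ 2) := by
      intro k hk
      have hks : k < s := Finset.mem_range.1 hk
      have hkm : k < min p₁ p₂ := by omega
      have h1 : γ < σY k := hs1 k hks
      have h2 : σY k ≤ σX k + opNorm Z := hweyl k hkm
      have h3 : γ / 101 ≤ σX k := by linarith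
      refine le_min (by nlinarith) ?_
      have h4 : (γ / 101) ^ 2 ≤ σX k ^ 2 := pow_le_pow_left₀ (by positivity) h3 2
      calc γ ^ 2 / 10201 = (γ / 101) ^ 2 := by ring
        _ ≤ σX k ^ 2 := h4
    have e : (s : ℝ) * (γ ^ 2 / 10201) = ∑ k ∈ Finset.range s, (γ ^ 2 / 10201) := by
      rw [Finset.sum_const, Finset.card_range, nsmul_eq_mul]
    have h5 : (s : ℝ) * (γ ^ 2 / 10201) ≤ S := by
      rw [e]
      calc ∑ k ∈ Finset.range s, (γ ^ 2 / 10201)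
          ≤ ∑ k ∈ Finset.range s, min (γ ^ 2) (σX k ^ 2) := Finset.sum_le_sum hterm
        _ ≤ S := by
            rw [hS]
            exact Finset.sum_le_sum_of_subset_of_nonneg (Finset.range_subset_range.2 hsm)
              fun k _ _ => le_min (by positivity) (by positivity)
    nlinarith
  -- final combination
  have hPMfrob2 : frobSq (P * M) ≤ 9 * ((s : ℝ) * γ ^ 2) := by
    calc frobSq (P * M) ≤ (s : ℝ) * (9 * γ ^ 2) := hPMfrob
      _ = 9 * ((s : ℝ) * γ ^ 2) := by ring
  linarith [hTXsplit, hMsplit, hPMfrob2, hNfrob, hXrX, hrS, hsS, hS0]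
end
end

section
/- Let $M = M^* + E \in \mathbb{R}^{n_1 \times n_2}$ with $n_1 \le n_2$, with singular values $\sigma_1^* \geq \cdots \geq \sigma_{n_1}^*$ of $M^*$ and corresponding leading-$R$ singular subspaces $U^*, V^*$ of $M^*$ and $U, V$ of $M$. If $\|E\|_{op} < \sigma_R^* - \sigma_{R+1}^*$, then $\max\{\|\sin\Theta(U, U^*)\|_{op}, \|\sin\Theta(V, V^*)\|_{op}\} \leq \frac{\max\{\|E^\top U^*\|_{op}, \|E V^*\|_{op}\}}{\sigma_R^* - \sigma_{R+1}^* - \|E\|_{op}} \leq \frac{\|E\|_{op}}{\sigma_R^* - \sigma_{R+1}^* - \|E\|_{op}}$. -/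
noncomputable section
open Matrix

/-- Rectangular diagonal matrix with (1-indexed) diagonal entries `σ 1, σ 2, …`. -/
def rectDiagOne (p q : ℕ) (σ : ℕ → ℝ) : Matrix (Fin p) (Fin q) ℝ :=
  Matrix.of fun i j => if (i : ℕ) = (j : ℕ) then σ ((i : ℕ) + 1) else 0

/-- Smallest singular value of a square matrix:
`σ_min(W) = inf {‖W x‖ : ‖x‖ = 1}`. -/
def sigmaMin {R : ℕ} (W : Matrix (Fin R) (Fin R) ℝ) : ℝ :=
  sInf ((fun x : EuclideanSpace ℝ (Fin R) => ‖Matrix.toEuclideanLin W x‖) ''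
    {x : EuclideanSpace ℝ (Fin R) | ‖x‖ = 1})

/-- `‖sin Θ(Û, U)‖_op = √(1 - σ_min²(Ûᵀ U))` for matrices with orthonormal columns. -/
def sinThetaOp {p R : ℕ} (Uhat U : Matrix (Fin p) (Fin R) ℝ) : ℝ :=
  Real.sqrt (1 - sigmaMin (Uhatᵀ * U) ^ 2)

namespace Wedin
open Finset
open scoped Matrix.Norms.L2Operator

lemma opNorm_eq {m n : ℕ} (A : Matrix (Fin m) (Fin n) ℝ) : opNorm A = ‖A‖ := rfl

abbrev v2 {k : ℕ} (y : Fin k → ℝ) : EuclideanSpace ℝ (Fin k) :=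
  (WithLp.equiv 2 (Fin k → ℝ)).symm y

abbrev uv2 {k : ℕ} (x : EuclideanSpace ℝ (Fin k)) : Fin k → ℝ :=
  (WithLp.equiv 2 (Fin k → ℝ)) x

lemma normsq_v2 {k : ℕ} (y : Fin k → ℝ) : ‖v2 y‖ ^ 2 = ∑ i, y i ^ 2 := by
  rw [EuclideanSpace.norm_eq, Real.sq_sqrt (by positivity)]
  simp [sq_abs]

lemma norm_mulVec_le {m n : ℕ} (A : Matrix (Fin m) (Fin n) ℝ) (x : Fin n → ℝ) :
    ‖v2 (A *ᵥ x)‖ ≤ ‖A‖ * ‖v2 x‖ := by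
  have h := (LinearMap.toContinuousLinearMap (Matrix.toEuclideanLin A)).le_opNorm (v2 x)
  rw [show ((LinearMap.toContinuousLinearMap (Matrix.toEuclideanLin A)) (v2 x)
      : EuclideanSpace ℝ (Fin m)) = Matrix.toEuclideanLin A (v2 x) from rfl,
    Matrix.toEuclideanLin_apply] at h
  exact h

lemma opNorm_le_bound {m n : ℕ} (A : Matrix (Fin m) (Fin n) ℝ) (c : ℝ) (hc : 0 ≤ c)
    (h : ∀ x : Fin n → ℝ, ‖v2 (A *ᵥ x)‖ ≤ c * ‖v2 x‖) : ‖A‖ ≤ c := by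
  rw [Matrix.l2_opNorm_def]
  refine ContinuousLinearMap.opNorm_le_bound _ hc fun x => ?_
  have := h ((WithLp.equiv 2 (Fin n → ℝ)) x)
  exact this

lemma le_of_sq_le_sq {a b : ℝ} (hb : 0 ≤ b) (h : a ^ 2 ≤ b ^ 2) (ha : 0 ≤ a) : a ≤ b := by
  nlinarith

lemma normsq_mulVec_eq {m n : ℕ} (A : Matrix (Fin m) (Fin n) ℝ) (hA : Aᵀ * A = 1)
    (x : Fin n → ℝ) : ‖v2 (A *ᵥ x)‖ ^ 2 = ‖v2 x‖ ^ 2 := by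
  rw [normsq_v2, normsq_v2]
  have key : (A *ᵥ x) ⬝ᵥ (A *ᵥ x) = x ⬝ᵥ x := by
    rw [Matrix.dotProduct_mulVec, ← Matrix.mulVec_transpose, Matrix.mulVec_mulVec, hA,
      Matrix.one_mulVec]
  simpa [dotProduct, pow_two] using key

lemma norm_v2_mulVec_eq {m n : ℕ} (A : Matrix (Fin m) (Fin n) ℝ) (hA : Aᵀ * A = 1)
    (x : Fin n → ℝ) : ‖v2 (A *ᵥ x)‖ = ‖v2 x‖ := by
  have := normsq_mulVec_eq A hA x
  nlinarith [norm_nonneg (v2 (A *ᵥ x)), norm_nonneg (v2 x)]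

lemma norm_le_one {m n : ℕ} (A : Matrix (Fin m) (Fin n) ℝ) (hA : Aᵀ * A = 1) : ‖A‖ ≤ 1 := by
  refine opNorm_le_bound A 1 zero_le_one fun x => ?_
  rw [norm_v2_mulVec_eq A hA, one_mul]

lemma norm_transpose {m n : ℕ} (A : Matrix (Fin m) (Fin n) ℝ) : ‖Aᵀ‖ = ‖A‖ := by
  have h : Aᴴ = Aᵀ := by ext i j; simp [Matrix.conjTranspose_apply]
  rw [← h, Matrix.l2_opNorm_conjTranspose]

lemma submatrix_orth {p k : ℕ} (Q : Matrix (Fin p) (Fin p) ℝ) (hQ : Qᵀ * Q = 1)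
    (e : Fin k → Fin p) (he : Function.Injective e) :
    (Q.submatrix id e)ᵀ * (Q.submatrix id e) = 1 := by
  have h1 : (Q.submatrix id e)ᵀ * (Q.submatrix id e) = (Qᵀ * Q).submatrix e e := by
    ext a b; simp [Matrix.mul_apply]
  rw [h1, hQ]
  ext a b
  simp [Matrix.one_apply, he.eq_iff]

/-- Column-inclusion matrix. -/
def inc {a b : ℕ} (e : Fin a → Fin b) : Matrix (Fin b) (Fin a) ℝ :=
  Matrix.of fun j k => if j = e k then 1 else 0

/-- Embedding of trailing indices. -/
def hiE {p : ℕ} (R : ℕ) (h : R ≤ p) : Fin (p - R) → Fin p := fun j => ⟨R + (j : ℕ), by omega⟩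

lemma hiE_injective {p R : ℕ} (h : R ≤ p) : Function.Injective (hiE (p := p) R h) := by
  intro a b hab
  have h2 : R + (a : ℕ) = R + (b : ℕ) := congrArg Fin.val hab
  exact Fin.ext (by omega)

lemma mul_inc {m a b : ℕ} (B : Matrix (Fin m) (Fin b) ℝ) (e : Fin a → Fin b) :
    B * inc e = B.submatrix id e := by
  ext i l; simp [Matrix.mul_apply, inc, mul_ite]

lemma incT_mul {m a b : ℕ} (B : Matrix (Fin b) (Fin m) ℝ) (e : Fin a → Fin b) :
    (inc e)ᵀ * B = B.submatrix e id := by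
  ext k i; simp [Matrix.mul_apply, inc, ite_mul]

section sums

def ext0 {p : ℕ} (f : Fin p → ℝ) : ℕ → ℝ := fun i => if h : i < p then f ⟨i, h⟩ else 0

lemma sum_ext0 {p : ℕ} (f : Fin p → ℝ) : ∑ i : Fin p, f i = ∑ i ∈ Finset.range p, ext0 f i := by
  rw [← Fin.sum_univ_eq_sum_range]
  exact Finset.sum_congr rfl fun i _ => by simp [ext0, i.isLt]

lemma sum_sq_split {p R : ℕ} (hR : R ≤ p) (f : Fin p → ℝ) :
    ∑ i : Fin p, f i ^ 2 =
      (∑ j : Fin R, f (Fin.castLE hR j) ^ 2) + ∑ j : Fin (p - R), f (hiE R hR j) ^ 2 := by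
  rw [sum_ext0 (fun i => f i ^ 2)]
  rw [Finset.range_eq_Ico, ← Finset.sum_Ico_consecutive _ (Nat.zero_le R) hR]
  congr 1
  · rw [← Finset.range_eq_Ico, ← Fin.sum_univ_eq_sum_range]
    refine Finset.sum_congr rfl fun j _ => ?_
    have hj : (j : ℕ) < p := lt_of_lt_of_le j.isLt hR
    simp only [ext0, hj, dif_pos]
    rfl
  · rw [Finset.sum_Ico_eq_sum_range, ← Fin.sum_univ_eq_sum_range]
    refine Finset.sum_congr rfl fun j _ => ?_
    have hj : R + (j : ℕ) < p := by omega
    simp only [ext0, hj, dif_pos]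
    rfl

lemma sum_dite_le {a b : ℕ} (g : Fin b → ℝ) (hg : ∀ j, 0 ≤ g j) :
    ∑ i : Fin a, (if h : (i : ℕ) < b then g ⟨(i : ℕ), h⟩ else 0) ≤ ∑ j : Fin b, g j := by
  have h1 : ∑ i : Fin a, (if h : (i : ℕ) < b then g ⟨(i : ℕ), h⟩ else 0)
      = ∑ i ∈ Finset.range a, ext0 g i := by
    rw [← Fin.sum_univ_eq_sum_range]; exact Finset.sum_congr rfl fun i _ => rfl
  have h2 : ∑ j : Fin b, g j = ∑ i ∈ Finset.range b, ext0 g i := sum_ext0 g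
  have hnn : ∀ i, 0 ≤ ext0 g i := by
    intro i; unfold ext0; split
    · exact hg _
    · exact le_refl 0
  rw [h1, h2]
  calc ∑ i ∈ Finset.range a, ext0 g i ≤ ∑ i ∈ Finset.range (max a b), ext0 g i :=
        Finset.sum_le_sum_of_subset_of_nonneg
          (Finset.range_subset_range.2 (le_max_left a b)) fun i _ _ => hnn i
    _ = ∑ i ∈ Finset.range b, ext0 g i := by
        refine (Finset.sum_subset (Finset.range_subset_range.2 (le_max_right a b)) ?_).symm
        intro i _ hib
        have : ¬ i < b := by simpa using hib
        simp [ext0, this]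

lemma sum_castLE_eq {a b : ℕ} (hab : a ≤ b) (f : Fin b → ℝ)
    (h0 : ∀ j : Fin b, a ≤ (j : ℕ) → f j = 0) :
    ∑ i : Fin a, f (Fin.castLE hab i) ^ 2 = ∑ j : Fin b, f j ^ 2 := by
  rw [sum_ext0 (fun j => f j ^ 2)]
  have h1 : ∑ i : Fin a, f (Fin.castLE hab i) ^ 2
      = ∑ i ∈ Finset.range a, ext0 (fun j => f j ^ 2) i := by
    rw [← Fin.sum_univ_eq_sum_range]
    refine Finset.sum_congr rfl fun i _ => ?_
    have hi : (i : ℕ) < b := lt_of_lt_of_le i.isLt hab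
    simp only [ext0, hi, dif_pos]
    rfl
  rw [h1]
  refine Finset.sum_subset (Finset.range_subset_range.2 hab) ?_
  intro i hib hia
  have h1 : i < b := Finset.mem_range.1 hib
  have h2 : a ≤ i := by simpa using hia
  simp [ext0, h1, h0 ⟨i, h1⟩ h2]

lemma sum_castLE_le {a b : ℕ} (hab : a ≤ b) (f : Fin b → ℝ) :
    ∑ i : Fin a, f (Fin.castLE hab i) ^ 2 ≤ ∑ j : Fin b, f j ^ 2 := by
  have h1 : ∑ i : Fin a, f (Fin.castLE hab i) ^ 2
      = ∑ i : Fin a, (if h : (i : ℕ) < b then f ⟨(i : ℕ), h⟩ ^ 2 else 0) := by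
    refine Finset.sum_congr rfl fun i _ => ?_
    have hi : (i : ℕ) < b := lt_of_lt_of_le i.isLt hab
    simp only [hi, dif_pos]
    rfl
  rw [h1]
  exact sum_dite_le (fun j => f j ^ 2) (fun j => sq_nonneg _)

end sums

section structureConstants

variable {n₁ n₂ R : ℕ}

lemma rd_mul_inc (h12 : n₁ ≤ n₂) (hR : R ≤ n₁) (σ : ℕ → ℝ) :
    rectDiagOne n₁ n₂ σ * inc (Fin.castLE (hR.trans h12)) =
      inc (Fin.castLE hR) * Matrix.diagonal (fun j : Fin R => σ ((j : ℕ) + 1)) := by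
  ext i j
  rw [mul_inc, Matrix.mul_diagonal]
  simp only [Matrix.submatrix_apply, rectDiagOne, Matrix.of_apply, inc, id_eq,
    Fin.coe_castLE, Fin.ext_iff]
  split_ifs with h1
  · rw [h1]; ring
  · ring

lemma rdT_mul_inc (h12 : n₁ ≤ n₂) (hR : R ≤ n₁) (σ : ℕ → ℝ) :
    (rectDiagOne n₁ n₂ σ)ᵀ * inc (Fin.castLE hR) =
      inc (Fin.castLE (hR.trans h12)) * Matrix.diagonal (fun j : Fin R => σ ((j : ℕ) + 1)) := by
  ext i j
  rw [mul_inc, Matrix.mul_diagonal]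
  simp only [Matrix.submatrix_apply, Matrix.transpose_apply, rectDiagOne, Matrix.of_apply,
    inc, id_eq, Fin.coe_castLE, Fin.ext_iff]
  split_ifs with h1 h2 h2
  · ring
  · omega
  · omega
  · ring

lemma incT_hi_mul_rd (h12 : n₁ ≤ n₂) (hR : R ≤ n₁) (σ : ℕ → ℝ) :
    (inc (hiE R hR))ᵀ * rectDiagOne n₁ n₂ σ =
      (Matrix.of fun (i : Fin (n₁ - R)) (j : Fin (n₂ - R)) =>
          if (i : ℕ) = (j : ℕ) then σ (R + (i : ℕ) + 1) else 0)
        * (inc (hiE R (hR.trans h12)))ᵀ := by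
  ext i l
  rw [incT_mul]
  simp only [Matrix.submatrix_apply, rectDiagOne, Matrix.of_apply, Matrix.mul_apply,
    Matrix.transpose_apply, inc, hiE, id_eq, Fin.ext_iff]
  have hi2 : (i : ℕ) < n₂ - R := by omega
  rw [Finset.sum_eq_single (⟨(i : ℕ), hi2⟩ : Fin (n₂ - R))]
  · simp only [Fin.val_mk, if_true]
    split_ifs with h1 h2 h2
    · ring
    · exact absurd h1.symm h2
    · exact absurd h2.symm h1
    · ring
  · intro k _ hk
    have hk' : ¬ ((i : ℕ) = (k : ℕ)) := fun hc => hk (Fin.ext hc.symm)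
    simp [hk']
  · intro h; exact absurd (Finset.mem_univ _) h

lemma incT_hi2_mul_rdT (h12 : n₁ ≤ n₂) (hR : R ≤ n₁) (σ : ℕ → ℝ) :
    (inc (hiE R (hR.trans h12)))ᵀ * (rectDiagOne n₁ n₂ σ)ᵀ =
      (Matrix.of fun (i : Fin (n₂ - R)) (j : Fin (n₁ - R)) =>
          if (i : ℕ) = (j : ℕ) then σ (R + (i : ℕ) + 1) else 0)
        * (inc (hiE R hR))ᵀ := by
  ext i l
  rw [incT_mul]
  simp only [Matrix.submatrix_apply, rectDiagOne, Matrix.of_apply, Matrix.mul_apply,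
    Matrix.transpose_apply, inc, hiE, id_eq, Fin.ext_iff]
  by_cases hcase : (i : ℕ) < n₁ - R
  · rw [Finset.sum_eq_single (⟨(i : ℕ), hcase⟩ : Fin (n₁ - R))]
    · simp only [Fin.val_mk, if_true]
      split_ifs with h1
      · rw [h1]; ring
      · ring
    · intro k _ hk
      have hk' : ¬ ((i : ℕ) = (k : ℕ)) := fun hc => hk (Fin.ext hc.symm)
      simp [hk']
    · intro h; exact absurd (Finset.mem_univ _) h
  · have hL : ¬ ((l : ℕ) = R + (i : ℕ)) := by omega
    rw [Finset.sum_eq_zero]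
    · simp [hL]
    · intro k _
      have hk' : ¬ ((i : ℕ) = (k : ℕ)) := by omega
      simp [hk']

end structureConstants

section normBounds

lemma rectlike_mulVec {a b : ℕ} (f : ℕ → ℝ) (x : Fin b → ℝ) (i : Fin a) :
    ((Matrix.of fun (i : Fin a) (j : Fin b) => if (i : ℕ) = (j : ℕ) then f (i : ℕ) else 0)
      *ᵥ x) i = if h : (i : ℕ) < b then f (i : ℕ) * x ⟨(i : ℕ), h⟩ else 0 := by
  simp only [Matrix.mulVec, dotProduct, Matrix.of_apply]
  by_cases h : (i : ℕ) < b
  · rw [dif_pos h, Finset.sum_eq_single (⟨(i : ℕ), h⟩ : Fin b)]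
    · simp
    · intro k _ hk
      have : ¬ ((i : ℕ) = (k : ℕ)) := fun hc => hk (Fin.ext hc.symm)
      simp [this]
    · intro hh; exact absurd (Finset.mem_univ _) hh
  · rw [dif_neg h, Finset.sum_eq_zero]
    intro k _
    have : ¬ ((i : ℕ) = (k : ℕ)) := by omega
    simp [this]

lemma norm_rectlike_le {a b : ℕ} (f : ℕ → ℝ) (c : ℝ) (hc : 0 ≤ c)
    (hf : ∀ i : Fin a, (i : ℕ) < b → |f (i : ℕ)| ≤ c) :
    ‖(Matrix.of fun (i : Fin a) (j : Fin b) =>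
        if (i : ℕ) = (j : ℕ) then f (i : ℕ) else 0)‖ ≤ c := by
  refine opNorm_le_bound _ c hc fun x => ?_
  refine le_of_sq_le_sq (by positivity) ?_ (norm_nonneg _)
  rw [normsq_v2, mul_pow, normsq_v2]
  calc ∑ i : Fin a, ((Matrix.of fun (i : Fin a) (j : Fin b) =>
          if (i : ℕ) = (j : ℕ) then f (i : ℕ) else 0) *ᵥ x) i ^ 2
      ≤ ∑ i : Fin a, (if h : (i : ℕ) < b then c ^ 2 * x ⟨(i : ℕ), h⟩ ^ 2 else 0) := by
        refine Finset.sum_le_sum fun i _ => ?_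
        rw [rectlike_mulVec]
        by_cases h : (i : ℕ) < b
        · rw [dif_pos h, dif_pos h, mul_pow]
          have h2 : f (i : ℕ) ^ 2 ≤ c ^ 2 := by
            rw [← sq_abs]; exact pow_le_pow_left₀ (abs_nonneg _) (hf i h) 2
          exact mul_le_mul_of_nonneg_right h2 (sq_nonneg _)
        · rw [dif_neg h, dif_neg h]
          norm_num
    _ ≤ ∑ j : Fin b, c ^ 2 * x j ^ 2 :=
        sum_dite_le (fun j => c ^ 2 * x j ^ 2) (fun j => by positivity)
    _ = c ^ 2 * ∑ j : Fin b, x j ^ 2 := by rw [Finset.mul_sum]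

lemma diag_mulVec {a : ℕ} (d : Fin a → ℝ) (x : Fin a → ℝ) (i : Fin a) :
    (Matrix.diagonal d *ᵥ x) i = d i * x i := by
  simp [Matrix.mulVec_diagonal]

lemma norm_diag_le {a : ℕ} (d : Fin a → ℝ) (c : ℝ) (hc : 0 ≤ c) (hd : ∀ i, |d i| ≤ c) :
    ‖Matrix.diagonal d‖ ≤ c := by
  refine opNorm_le_bound _ c hc fun x => ?_
  refine le_of_sq_le_sq (by positivity) ?_ (norm_nonneg _)
  rw [normsq_v2, mul_pow, normsq_v2, Finset.mul_sum]
  refine Finset.sum_le_sum fun i _ => ?_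
  rw [diag_mulVec, mul_pow]
  have h2 : d i ^ 2 ≤ c ^ 2 := by
    rw [← sq_abs]; exact pow_le_pow_left₀ (abs_nonneg _) (hd i) 2
  exact mul_le_mul_of_nonneg_right h2 (sq_nonneg _)

end normBounds

section sinTheta

lemma submatrix_row_mulVec {a b m : ℕ} (B : Matrix (Fin b) (Fin m) ℝ) (e : Fin a → Fin b)
    (x : Fin m → ℝ) (j : Fin a) :
    ((B.submatrix e id) *ᵥ x) j = (B *ᵥ x) (e j) := by
  simp [Matrix.mulVec, dotProduct]

lemma key_split {p R : ℕ} (hRp : R ≤ p)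
    (Q : Matrix (Fin p) (Fin p) ℝ) (W : Matrix (Fin p) (Fin R) ℝ)
    (hQ : Q * Qᵀ = 1) (hW : Wᵀ * W = 1) (x : Fin R → ℝ) :
    ‖v2 (((Q.submatrix id (Fin.castLE hRp))ᵀ * W) *ᵥ x)‖ ^ 2
      + ‖v2 (((Q.submatrix id (hiE R hRp))ᵀ * W) *ᵥ x)‖ ^ 2 = ‖v2 x‖ ^ 2 := by
  have e1 : (Q.submatrix id (Fin.castLE hRp))ᵀ * W
      = (Qᵀ * W).submatrix (Fin.castLE hRp) id := by
    rw [Matrix.transpose_submatrix]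
    ext i j; simp [Matrix.mul_apply]
  have e2 : (Q.submatrix id (hiE R hRp))ᵀ * W = (Qᵀ * W).submatrix (hiE R hRp) id := by
    rw [Matrix.transpose_submatrix]
    ext i j; simp [Matrix.mul_apply]
  rw [e1, e2, normsq_v2, normsq_v2]
  have e3 : ∀ j, ((Qᵀ * W).submatrix (Fin.castLE hRp) id *ᵥ x) j
      = ((Qᵀ * W) *ᵥ x) (Fin.castLE hRp j) := fun j => submatrix_row_mulVec _ _ _ _
  have e4 : ∀ j, ((Qᵀ * W).submatrix (hiE R hRp) id *ᵥ x) j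
      = ((Qᵀ * W) *ᵥ x) (hiE R hRp j) := fun j => submatrix_row_mulVec _ _ _ _
  simp_rw [e3, e4]
  rw [← sum_sq_split hRp (fun i => ((Qᵀ * W) *ᵥ x) i)]
  have e5 : (Qᵀ * W) *ᵥ x = Qᵀ *ᵥ (W *ᵥ x) := by rw [Matrix.mulVec_mulVec]
  rw [e5, ← normsq_v2]
  rw [normsq_mulVec_eq Qᵀ (by rwa [Matrix.transpose_transpose]) (W *ᵥ x)]
  exact normsq_mulVec_eq W hW x

lemma sinTheta_le {p R : ℕ} (hR1 : 1 ≤ R) (hRp : R ≤ p)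
    (Q : Matrix (Fin p) (Fin p) ℝ) (W : Matrix (Fin p) (Fin R) ℝ)
    (hQ : Q * Qᵀ = 1) (hW : Wᵀ * W = 1) :
    sinThetaOp (Q.submatrix id (Fin.castLE hRp)) W ≤ ‖(Q.submatrix id (hiE R hRp))ᵀ * W‖ := by
  set B := ‖(Q.submatrix id (hiE R hRp))ᵀ * W‖ with hBdef
  have hB0 : 0 ≤ B := norm_nonneg _
  set s := sigmaMin ((Q.submatrix id (Fin.castLE hRp))ᵀ * W) with hsdef
  have hs0 : 0 ≤ s := by
    refine Real.sInf_nonneg fun z hz => ?_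
    obtain ⟨x, -, rfl⟩ := hz
    exact norm_nonneg _
  have main : 1 - s ^ 2 ≤ B ^ 2 := by
    by_cases hB1 : 1 ≤ B
    · nlinarith
    · push_neg at hB1
      have hsqrt : Real.sqrt (1 - B ^ 2) ≤ s := by
        refine le_csInf ?_ ?_
        · refine ⟨_, ⟨v2 (Pi.single (⟨0, hR1⟩ : Fin R) 1), ?_, rfl⟩⟩
          show ‖(EuclideanSpace.single (⟨0, hR1⟩ : Fin R) (1 : ℝ))‖ = 1
          simp [EuclideanSpace.norm_single]
        · rintro b ⟨x, hx, rfl⟩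
          have hx1 : ‖x‖ = 1 := hx
          have hkey := key_split hRp Q W hQ hW (uv2 x)
          have hvx : v2 (uv2 x) = x := rfl
          rw [hvx, hx1] at hkey
          have hb : ‖v2 (((Q.submatrix id (hiE R hRp))ᵀ * W) *ᵥ uv2 x)‖ ≤ B := by
            have := norm_mulVec_le ((Q.submatrix id (hiE R hRp))ᵀ * W) (uv2 x)
            rwa [hvx, hx1, mul_one] at this
          have h2 : 1 - B ^ 2
              ≤ ‖v2 (((Q.submatrix id (Fin.castLE hRp))ᵀ * W) *ᵥ uv2 x)‖ ^ 2 := by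
            nlinarith [norm_nonneg (v2 (((Q.submatrix id (hiE R hRp))ᵀ * W) *ᵥ uv2 x))]
          have h3 : ‖Matrix.toEuclideanLin ((Q.submatrix id (Fin.castLE hRp))ᵀ * W) x‖
              = ‖v2 (((Q.submatrix id (Fin.castLE hRp))ᵀ * W) *ᵥ uv2 x)‖ := by
            rw [Matrix.toEuclideanLin_apply]; rfl
          show Real.sqrt (1 - B ^ 2)
              ≤ ‖Matrix.toEuclideanLin ((Q.submatrix id (Fin.castLE hRp))ᵀ * W) x‖
          rw [h3]
          calc Real.sqrt (1 - B ^ 2)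
              ≤ Real.sqrt (‖v2 (((Q.submatrix id (Fin.castLE hRp))ᵀ * W) *ᵥ uv2 x)‖ ^ 2) :=
                Real.sqrt_le_sqrt h2
            _ = _ := by rw [Real.sqrt_sq (norm_nonneg _)]
      have h4 : 1 - B ^ 2 ≤ s ^ 2 := by
        have hBB : 0 ≤ 1 - B ^ 2 := by nlinarith
        calc 1 - B ^ 2 = Real.sqrt (1 - B ^ 2) ^ 2 := (Real.sq_sqrt hBB).symm
          _ ≤ s ^ 2 := by
              have := Real.sqrt_nonneg (1 - B ^ 2)
              nlinarith
      linarith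
  show Real.sqrt (1 - s ^ 2) ≤ B
  calc Real.sqrt (1 - s ^ 2) ≤ Real.sqrt (B ^ 2) := Real.sqrt_le_sqrt main
    _ = B := Real.sqrt_sq hB0

end sinTheta

section weyl

lemma rd_mulVec {n₁ n₂ : ℕ} (h12 : n₁ ≤ n₂) (σ : ℕ → ℝ) (y : Fin n₂ → ℝ) (i : Fin n₁) :
    (rectDiagOne n₁ n₂ σ *ᵥ y) i = σ ((i : ℕ) + 1) * y (Fin.castLE h12 i) := by
  simp only [Matrix.mulVec, dotProduct, rectDiagOne, Matrix.of_apply]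
  rw [Finset.sum_eq_single (Fin.castLE h12 i)]
  · simp
  · intro k _ hk
    have : ¬ ((i : ℕ) = (k : ℕ)) := fun hc => hk (Fin.ext hc.symm)
    simp [this]
  · intro hh; exact absurd (Finset.mem_univ _) hh

lemma svd_normsq {n₁ n₂ : ℕ} (h12 : n₁ ≤ n₂) (Uo : Matrix (Fin n₁) (Fin n₁) ℝ)
    (hUo : Uoᵀ * Uo = 1) (σ : ℕ → ℝ) (y : Fin n₂ → ℝ) :
    ‖v2 ((Uo * rectDiagOne n₁ n₂ σ) *ᵥ y)‖ ^ 2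
      = ∑ i : Fin n₁, (σ ((i : ℕ) + 1) * y (Fin.castLE h12 i)) ^ 2 := by
  rw [← Matrix.mulVec_mulVec, normsq_mulVec_eq Uo hUo, normsq_v2]
  exact Finset.sum_congr rfl fun i _ => by rw [rd_mulVec h12]

set_option maxHeartbeats 1000000 in
theorem weyl {n₁ n₂ R : ℕ} (h12 : n₁ ≤ n₂) (hRlt : R < n₁)
    (E : Matrix (Fin n₁) (Fin n₂) ℝ)
    (Us : Matrix (Fin n₁) (Fin n₁) ℝ) (Vs : Matrix (Fin n₂) (Fin n₂) ℝ) (σs : ℕ → ℝ)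
    (hUs : Usᵀ * Us = 1) (hVs : Vsᵀ * Vs = 1) (hVs' : Vs * Vsᵀ = 1)
    (hσs_mono : Antitone σs) (hσs_nonneg : ∀ k, 0 ≤ σs k)
    (Um : Matrix (Fin n₁) (Fin n₁) ℝ) (Vm : Matrix (Fin n₂) (Fin n₂) ℝ) (σm : ℕ → ℝ)
    (hUm : Umᵀ * Um = 1) (hVm : Vmᵀ * Vm = 1) (hVm' : Vm * Vmᵀ = 1)
    (hσm_mono : Antitone σm) (hσm_nonneg : ∀ k, 0 ≤ σm k)
    (hM : Us * rectDiagOne n₁ n₂ σs * Vsᵀ + E = Um * rectDiagOne n₁ n₂ σm * Vmᵀ) :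
    σm (R + 1) ≤ σs (R + 1) + ‖E‖ := by
  have hc1 : R + 1 ≤ n₂ := by omega
  have hR2 : R ≤ n₂ := by omega
  set P := Vm.submatrix id (Fin.castLE hc1) with hPdef
  set Nt := Vs.submatrix id (hiE R hR2) with hNdef
  have hP : Pᵀ * P = 1 := submatrix_orth Vm hVm _ (Fin.castLE_injective hc1)
  have hN : Ntᵀ * Nt = 1 := submatrix_orth Vs hVs _ (hiE_injective hR2)
  have hnormP : ∀ c, ‖Matrix.toEuclideanLin P c‖ = ‖c‖ := fun c => by
    rw [Matrix.toEuclideanLin_apply]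
    exact norm_v2_mulVec_eq P hP (uv2 c)
  have hnormN : ∀ c, ‖Matrix.toEuclideanLin Nt c‖ = ‖c‖ := fun c => by
    rw [Matrix.toEuclideanLin_apply]
    exact norm_v2_mulVec_eq Nt hN (uv2 c)
  have hinjP : Function.Injective (Matrix.toEuclideanLin P) := by
    intro c₁ c₂ hc
    have h := hnormP (c₁ - c₂)
    rw [map_sub, hc, sub_self, norm_zero] at h
    exact sub_eq_zero.mp (norm_eq_zero.mp h.symm)
  have hinjN : Function.Injective (Matrix.toEuclideanLin Nt) := by
    intro c₁ c₂ hc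
    have h := hnormN (c₁ - c₂)
    rw [map_sub, hc, sub_self, norm_zero] at h
    exact sub_eq_zero.mp (norm_eq_zero.mp h.symm)
  set S := LinearMap.range (Matrix.toEuclideanLin P) with hSdef
  set T := LinearMap.range (Matrix.toEuclideanLin Nt) with hTdef
  have hdimS : Module.finrank ℝ S = R + 1 := by
    rw [hSdef, LinearMap.finrank_range_of_inj hinjP, finrank_euclideanSpace_fin]
  have hdimT : Module.finrank ℝ T = n₂ - R := by
    rw [hTdef, LinearMap.finrank_range_of_inj hinjN, finrank_euclideanSpace_fin]
  have hsum := Submodule.finrank_sup_add_finrank_inf_eq S T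
  have hle : Module.finrank ℝ ↥(S ⊔ T) ≤ n₂ := by
    have := Submodule.finrank_le (S ⊔ T)
    rwa [finrank_euclideanSpace_fin] at this
  have hpos : 0 < Module.finrank ℝ ↥(S ⊓ T) := by omega
  obtain ⟨x, hx0⟩ := Module.finrank_pos_iff_exists_ne_zero.mp hpos
  set z : EuclideanSpace ℝ (Fin n₂) := (x : EuclideanSpace ℝ (Fin n₂)) with hzdef
  have hz0 : z ≠ 0 := fun h => hx0 (Subtype.ext h)
  have hzS : z ∈ S := x.2.1
  have hzT : z ∈ T := x.2.2
  obtain ⟨c, hcz⟩ := hzS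
  obtain ⟨d, hdz⟩ := hzT
  set f : Fin n₂ → ℝ := uv2 z with hfdef
  have hvf : v2 f = z := rfl
  have hfP : f = P *ᵥ uv2 c := by
    rw [hfdef, ← hcz, Matrix.toEuclideanLin_apply]
    exact Equiv.apply_symm_apply _ _
  have hfN : f = Nt *ᵥ uv2 d := by
    rw [hfdef, ← hdz, Matrix.toEuclideanLin_apply]
    exact Equiv.apply_symm_apply _ _
  set y : Fin n₂ → ℝ := Vmᵀ *ᵥ f with hydef
  set y' : Fin n₂ → ℝ := Vsᵀ *ᵥ f with hy'def
  have hy_supp : ∀ j : Fin n₂, R + 1 ≤ (j : ℕ) → y j = 0 := by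
    intro j hj
    rw [hydef, hfP, Matrix.mulVec_mulVec, hPdef, ← mul_inc, ← Matrix.mul_assoc, hVm,
      Matrix.one_mul]
    show (inc (Fin.castLE hc1) *ᵥ uv2 c) j = 0
    simp only [Matrix.mulVec, dotProduct, inc, Matrix.of_apply]
    refine Finset.sum_eq_zero fun k _ => ?_
    have : ¬ (j = Fin.castLE hc1 k) := by
      intro hc
      have : (j : ℕ) = (k : ℕ) := congrArg Fin.val hc
      omega
    simp [this]
  have hy'_supp : ∀ j : Fin n₂, (j : ℕ) < R → y' j = 0 := by
    intro j hj
    rw [hy'def, hfN, Matrix.mulVec_mulVec, hNdef, ← mul_inc, ← Matrix.mul_assoc, hVs,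
      Matrix.one_mul]
    show (inc (hiE R hR2) *ᵥ uv2 d) j = 0
    simp only [Matrix.mulVec, dotProduct, inc, Matrix.of_apply]
    refine Finset.sum_eq_zero fun k _ => ?_
    have : ¬ (j = hiE R hR2 k) := by
      intro hc
      have : (j : ℕ) = R + (k : ℕ) := congrArg Fin.val hc
      omega
    simp [this]
  have hy_norm : ∑ j : Fin n₂, y j ^ 2 = ‖z‖ ^ 2 := by
    rw [← normsq_v2, hydef, normsq_mulVec_eq Vmᵀ (by rwa [Matrix.transpose_transpose]), hvf]
  have hy'_norm : ∑ j : Fin n₂, y' j ^ 2 = ‖z‖ ^ 2 := by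
    rw [← normsq_v2, hy'def, normsq_mulVec_eq Vsᵀ (by rwa [Matrix.transpose_transpose]), hvf]
  have claimA : σm (R + 1) ^ 2 * ‖z‖ ^ 2
      ≤ ‖v2 ((Um * rectDiagOne n₁ n₂ σm * Vmᵀ) *ᵥ f)‖ ^ 2 := by
    rw [← Matrix.mulVec_mulVec, svd_normsq h12 Um hUm σm (Vmᵀ *ᵥ f)]
    calc σm (R + 1) ^ 2 * ‖z‖ ^ 2
        = ∑ i : Fin n₁, σm (R + 1) ^ 2 * y (Fin.castLE h12 i) ^ 2 := by
          rw [← Finset.mul_sum]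
          congr 1
          rw [sum_castLE_eq h12 y (fun j hj => hy_supp j (by omega)), hy_norm]
      _ ≤ ∑ i : Fin n₁, (σm ((i : ℕ) + 1) * y (Fin.castLE h12 i)) ^ 2 := by
          refine Finset.sum_le_sum fun i _ => ?_
          by_cases hiR : (i : ℕ) < R + 1
          · have h1 : σm (R + 1) ≤ σm ((i : ℕ) + 1) := hσm_mono (by omega)
            have h2 : 0 ≤ σm (R + 1) := hσm_nonneg _
            rw [mul_pow]
            have : σm (R + 1) ^ 2 ≤ σm ((i : ℕ) + 1) ^ 2 := by nlinarith
            exact mul_le_mul_of_nonneg_right this (sq_nonneg _)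
          · rw [hy_supp (Fin.castLE h12 i) (by simp only [Fin.coe_castLE]; omega)]
            simp
  have claimB : ‖v2 ((Us * rectDiagOne n₁ n₂ σs * Vsᵀ) *ᵥ f)‖ ^ 2
      ≤ σs (R + 1) ^ 2 * ‖z‖ ^ 2 := by
    rw [← Matrix.mulVec_mulVec, svd_normsq h12 Us hUs σs (Vsᵀ *ᵥ f)]
    calc ∑ i : Fin n₁, (σs ((i : ℕ) + 1) * y' (Fin.castLE h12 i)) ^ 2
        ≤ ∑ i : Fin n₁, σs (R + 1) ^ 2 * y' (Fin.castLE h12 i) ^ 2 := by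
          refine Finset.sum_le_sum fun i _ => ?_
          by_cases hiR : R ≤ (i : ℕ)
          · have h1 : σs ((i : ℕ) + 1) ≤ σs (R + 1) := hσs_mono (by omega)
            have h2 : 0 ≤ σs ((i : ℕ) + 1) := hσs_nonneg _
            rw [mul_pow]
            have : σs ((i : ℕ) + 1) ^ 2 ≤ σs (R + 1) ^ 2 := by nlinarith
            exact mul_le_mul_of_nonneg_right this (sq_nonneg _)
          · rw [hy'_supp (Fin.castLE h12 i) (by simp only [Fin.coe_castLE]; omega)]
            simp
      _ ≤ σs (R + 1) ^ 2 * ‖z‖ ^ 2 := by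
          rw [← hy'_norm]
          calc ∑ i : Fin n₁, σs (R + 1) ^ 2 * y' (Fin.castLE h12 i) ^ 2
              = σs (R + 1) ^ 2 * ∑ i : Fin n₁, y' (Fin.castLE h12 i) ^ 2 := by
                rw [Finset.mul_sum]
            _ ≤ σs (R + 1) ^ 2 * ∑ j : Fin n₂, y' j ^ 2 :=
                mul_le_mul_of_nonneg_left (sum_castLE_le h12 y') (sq_nonneg _)
  have hzpos : (0 : ℝ) < ‖z‖ := norm_pos_iff.mpr hz0
  have hA' : σm (R + 1) * ‖z‖ ≤ ‖v2 ((Um * rectDiagOne n₁ n₂ σm * Vmᵀ) *ᵥ f)‖ := by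
    refine le_of_sq_le_sq (norm_nonneg _) ?_ (mul_nonneg (hσm_nonneg _) (norm_nonneg _))
    calc (σm (R + 1) * ‖z‖) ^ 2 = σm (R + 1) ^ 2 * ‖z‖ ^ 2 := by ring
      _ ≤ _ := claimA
  have hB' : ‖v2 ((Us * rectDiagOne n₁ n₂ σs * Vsᵀ) *ᵥ f)‖ ≤ σs (R + 1) * ‖z‖ := by
    refine le_of_sq_le_sq (mul_nonneg (hσs_nonneg _) (norm_nonneg _)) ?_ (norm_nonneg _)
    calc ‖v2 ((Us * rectDiagOne n₁ n₂ σs * Vsᵀ) *ᵥ f)‖ ^ 2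
        ≤ σs (R + 1) ^ 2 * ‖z‖ ^ 2 := claimB
      _ = (σs (R + 1) * ‖z‖) ^ 2 := by ring
  have hEf : ‖v2 (E *ᵥ f)‖ ≤ ‖E‖ * ‖z‖ := by
    have := norm_mulVec_le E f
    rwa [hvf] at this
  have hsplit : (Um * rectDiagOne n₁ n₂ σm * Vmᵀ) *ᵥ f
      = (Us * rectDiagOne n₁ n₂ σs * Vsᵀ) *ᵥ f + E *ᵥ f := by
    rw [← Matrix.add_mulVec, hM]
  have htri : ‖v2 ((Um * rectDiagOne n₁ n₂ σm * Vmᵀ) *ᵥ f)‖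
      ≤ ‖v2 ((Us * rectDiagOne n₁ n₂ σs * Vsᵀ) *ᵥ f)‖ + ‖v2 (E *ᵥ f)‖ := by
    rw [hsplit]
    exact norm_add_le (v2 ((Us * rectDiagOne n₁ n₂ σs * Vsᵀ) *ᵥ f)) (v2 (E *ᵥ f))
  have final : σm (R + 1) * ‖z‖ ≤ (σs (R + 1) + ‖E‖) * ‖z‖ := by
    calc σm (R + 1) * ‖z‖ ≤ _ := hA'
      _ ≤ _ := htri
      _ ≤ σs (R + 1) * ‖z‖ + ‖E‖ * ‖z‖ := add_le_add hB' hEf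
      _ = (σs (R + 1) + ‖E‖) * ‖z‖ := by ring
  exact le_of_mul_le_mul_right (by linarith) hzpos

end weyl

end Wedin

open scoped Matrix.Norms.L2Operator

set_option maxHeartbeats 2000000 in
/-- Wedin's `sin Θ` theorem.  With `M = M* + E` (`n₁ ≤ n₂`), full SVDs
`M* = Us (diag σs) Vsᵀ` and `M = Um (diag σm) Vmᵀ` with non-increasing, nonnegative
singular values (1-indexed: `σs 1 ≥ σs 2 ≥ ⋯`), leading-`R` singular subspaces given by
the first `R` columns of the orthogonal factors, if `‖E‖_op < σ_R* - σ_{R+1}*`, then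
`max{‖sinΘ(U,U*)‖, ‖sinΘ(V,V*)‖} ≤ max{‖Eᵀ U*‖, ‖E V*‖} / (σ_R* - σ_{R+1}* - ‖E‖)
  ≤ ‖E‖ / (σ_R* - σ_{R+1}* - ‖E‖)`. -/
theorem wedin_sin_theta (n₁ n₂ R : ℕ) (h12 : n₁ ≤ n₂) (hR1 : 1 ≤ R) (hR : R ≤ n₁)
    (Mstar E : Matrix (Fin n₁) (Fin n₂) ℝ)
    (Us : Matrix (Fin n₁) (Fin n₁) ℝ) (Vs : Matrix (Fin n₂) (Fin n₂) ℝ) (σs : ℕ → ℝ)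
    (hUs : Usᵀ * Us = 1) (hUs' : Us * Usᵀ = 1) (hVs : Vsᵀ * Vs = 1) (hVs' : Vs * Vsᵀ = 1)
    (hσs_mono : Antitone σs) (hσs_nonneg : ∀ k, 0 ≤ σs k)
    (hMs : Mstar = Us * rectDiagOne n₁ n₂ σs * Vsᵀ)
    (Um : Matrix (Fin n₁) (Fin n₁) ℝ) (Vm : Matrix (Fin n₂) (Fin n₂) ℝ) (σm : ℕ → ℝ)
    (hUm : Umᵀ * Um = 1) (hUm' : Um * Umᵀ = 1) (hVm : Vmᵀ * Vm = 1) (hVm' : Vm * Vmᵀ = 1)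
    (hσm_mono : Antitone σm) (hσm_nonneg : ∀ k, 0 ≤ σm k)
    (hM : Mstar + E = Um * rectDiagOne n₁ n₂ σm * Vmᵀ)
    (hgap : opNorm E < σs R - σs (R + 1)) :
    max (sinThetaOp (Um.submatrix id (Fin.castLE hR)) (Us.submatrix id (Fin.castLE hR)))
        (sinThetaOp (Vm.submatrix id (Fin.castLE (hR.trans h12)))
          (Vs.submatrix id (Fin.castLE (hR.trans h12))))
      ≤ max (opNorm (Eᵀ * Us.submatrix id (Fin.castLE hR)))
            (opNorm (E * Vs.submatrix id (Fin.castLE (hR.trans h12))))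
          / (σs R - σs (R + 1) - opNorm E) ∧
    max (opNorm (Eᵀ * Us.submatrix id (Fin.castLE hR)))
        (opNorm (E * Vs.submatrix id (Fin.castLE (hR.trans h12))))
        / (σs R - σs (R + 1) - opNorm E)
      ≤ opNorm E / (σs R - σs (R + 1) - opNorm E) := by
  classical
  simp only [Wedin.opNorm_eq] at hgap ⊢
  set U1 := Us.submatrix id (Fin.castLE hR) with hU1def
  set V1 := Vs.submatrix id (Fin.castLE (hR.trans h12)) with hV1def
  set U2 := Um.submatrix id (Wedin.hiE R hR) with hU2def
  set V2 := Vm.submatrix id (Wedin.hiE R (hR.trans h12)) with hV2def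
  have hU1o : U1ᵀ * U1 = 1 := Wedin.submatrix_orth Us hUs _ (Fin.castLE_injective hR)
  have hV1o : V1ᵀ * V1 = 1 :=
    Wedin.submatrix_orth Vs hVs _ (Fin.castLE_injective (hR.trans h12))
  have hU2o : U2ᵀ * U2 = 1 := Wedin.submatrix_orth Um hUm _ (Wedin.hiE_injective hR)
  have hV2o : V2ᵀ * V2 = 1 :=
    Wedin.submatrix_orth Vm hVm _ (Wedin.hiE_injective (hR.trans h12))
  set D1 := Matrix.diagonal (fun j : Fin R => σs ((j : ℕ) + 1)) with hD1def
  set Dinv := Matrix.diagonal (fun j : Fin R => (σs ((j : ℕ) + 1))⁻¹) with hDidef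
  set C := Matrix.of (fun (i : Fin (n₁ - R)) (j : Fin (n₂ - R)) =>
    if (i : ℕ) = (j : ℕ) then σm (R + (i : ℕ) + 1) else 0) with hCdef
  set C' := Matrix.of (fun (i : Fin (n₂ - R)) (j : Fin (n₁ - R)) =>
    if (i : ℕ) = (j : ℕ) then σm (R + (i : ℕ) + 1) else 0) with hC'def
  have hE0 : (0 : ℝ) ≤ ‖E‖ := norm_nonneg _
  have hgapg : 0 < σs R - σs (R + 1) - ‖E‖ := by linarith
  have hσRpos : 0 < σs R := by have := hσs_nonneg (R + 1); linarith
  set μ := σs (R + 1) + ‖E‖ with hμdef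
  have hμ0 : 0 ≤ μ := add_nonneg (hσs_nonneg _) hE0
  have hMweyl : Us * rectDiagOne n₁ n₂ σs * Vsᵀ + E = Um * rectDiagOne n₁ n₂ σm * Vmᵀ := by
    rw [← hMs]; exact hM
  -- norms of the diagonal blocks
  have hCle : ‖C‖ ≤ μ := by
    rw [hCdef]
    refine Wedin.norm_rectlike_le (fun t => σm (R + t + 1)) μ hμ0 fun i hib => ?_
    have hRlt : R < n₁ := by omega
    have hw := Wedin.weyl h12 hRlt E Us Vs σs hUs hVs hVs' hσs_mono hσs_nonneg
      Um Vm σm hUm hVm hVm' hσm_mono hσm_nonneg hMweyl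
    have h1 : σm (R + (i : ℕ) + 1) ≤ σm (R + 1) := hσm_mono (by omega)
    rw [abs_of_nonneg (hσm_nonneg _)]
    calc σm (R + (i : ℕ) + 1) ≤ σm (R + 1) := h1
      _ ≤ μ := hw
  have hC'le : ‖C'‖ ≤ μ := by
    rw [hC'def]
    refine Wedin.norm_rectlike_le (fun t => σm (R + t + 1)) μ hμ0 fun i hib => ?_
    have hRlt : R < n₁ := by omega
    have hw := Wedin.weyl h12 hRlt E Us Vs σs hUs hVs hVs' hσs_mono hσs_nonneg
      Um Vm σm hUm hVm hVm' hσm_mono hσm_nonneg hMweyl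
    have h1 : σm (R + (i : ℕ) + 1) ≤ σm (R + 1) := hσm_mono (by omega)
    rw [abs_of_nonneg (hσm_nonneg _)]
    calc σm (R + (i : ℕ) + 1) ≤ σm (R + 1) := h1
      _ ≤ μ := hw
  have hσjpos : ∀ j : Fin R, 0 < σs ((j : ℕ) + 1) := fun j =>
    lt_of_lt_of_le hσRpos (hσs_mono (by omega))
  have hDD : D1 * Dinv = 1 := by
    rw [hD1def, hDidef, Matrix.diagonal_mul_diagonal]
    have h : (fun j : Fin R => σs ((j : ℕ) + 1) * (σs ((j : ℕ) + 1))⁻¹)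
        = fun _ : Fin R => (1 : ℝ) := funext fun j => mul_inv_cancel₀ (hσjpos j).ne'
    rw [h, Matrix.diagonal_one]
  have hDinvle : ‖Dinv‖ ≤ (σs R)⁻¹ := by
    rw [hDidef]
    refine Wedin.norm_diag_le _ _ (inv_nonneg.mpr hσRpos.le) fun j => ?_
    have h1 : σs R ≤ σs ((j : ℕ) + 1) := hσs_mono (by omega)
    rw [abs_of_nonneg (inv_nonneg.mpr (hσs_nonneg _))]
    exact inv_anti₀ hσRpos h1
  have lbound : ∀ {k : ℕ} (X : Matrix (Fin k) (Fin R) ℝ), σs R * ‖X‖ ≤ ‖X * D1‖ := by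
    intro k X
    have h1 : X = X * D1 * Dinv := by rw [Matrix.mul_assoc, hDD, Matrix.mul_one]
    have h2 : ‖X‖ ≤ ‖X * D1‖ * (σs R)⁻¹ := by
      calc ‖X‖ = ‖X * D1 * Dinv‖ := by rw [← h1]
        _ ≤ ‖X * D1‖ * ‖Dinv‖ := Matrix.l2_opNorm_mul _ _
        _ ≤ ‖X * D1‖ * (σs R)⁻¹ := mul_le_mul_of_nonneg_left hDinvle (norm_nonneg _)
    calc σs R * ‖X‖ ≤ σs R * (‖X * D1‖ * (σs R)⁻¹) :=
          mul_le_mul_of_nonneg_left h2 hσRpos.le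
      _ = ‖X * D1‖ := by field_simp
  -- matrix identities
  have hU1i : U1 = Us * Wedin.inc (Fin.castLE hR) := (Wedin.mul_inc _ _).symm
  have hV1i : V1 = Vs * Wedin.inc (Fin.castLE (hR.trans h12)) := (Wedin.mul_inc _ _).symm
  have hU2i : U2 = Um * Wedin.inc (Wedin.hiE R hR) := (Wedin.mul_inc _ _).symm
  have hV2i : V2 = Vm * Wedin.inc (Wedin.hiE R (hR.trans h12)) := (Wedin.mul_inc _ _).symm
  have hMsV1 : Mstar * V1 = U1 * D1 := by
    rw [hMs, hV1i, hU1i]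
    calc Us * rectDiagOne n₁ n₂ σs * Vsᵀ * (Vs * Wedin.inc (Fin.castLE (hR.trans h12)))
        = Us * (rectDiagOne n₁ n₂ σs
            * ((Vsᵀ * Vs) * Wedin.inc (Fin.castLE (hR.trans h12)))) := by
          simp only [Matrix.mul_assoc]
      _ = Us * (Wedin.inc (Fin.castLE hR) * D1) := by
          rw [hVs, Matrix.one_mul, Wedin.rd_mul_inc h12 hR]
      _ = Us * Wedin.inc (Fin.castLE hR) * D1 := by rw [Matrix.mul_assoc]
  have hMsTU1 : Mstarᵀ * U1 = V1 * D1 := by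
    rw [hMs, hU1i, hV1i]
    calc (Us * rectDiagOne n₁ n₂ σs * Vsᵀ)ᵀ * (Us * Wedin.inc (Fin.castLE hR))
        = Vs * ((rectDiagOne n₁ n₂ σs)ᵀ * ((Usᵀ * Us) * Wedin.inc (Fin.castLE hR))) := by
          simp only [Matrix.transpose_mul, Matrix.transpose_transpose, Matrix.mul_assoc]
      _ = Vs * (Wedin.inc (Fin.castLE (hR.trans h12)) * D1) := by
          rw [hUs, Matrix.one_mul, Wedin.rdT_mul_inc h12 hR]
      _ = Vs * Wedin.inc (Fin.castLE (hR.trans h12)) * D1 := by rw [Matrix.mul_assoc]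
  have key1 : ∀ Y : Matrix (Fin n₂) (Fin R) ℝ,
      U2ᵀ * ((Um * rectDiagOne n₁ n₂ σm * Vmᵀ) * Y) = C * (V2ᵀ * Y) := by
    intro Y
    rw [hU2i, hV2i]
    calc (Um * Wedin.inc (Wedin.hiE R hR))ᵀ * (Um * rectDiagOne n₁ n₂ σm * Vmᵀ * Y)
        = (Wedin.inc (Wedin.hiE R hR))ᵀ
            * ((Umᵀ * Um) * (rectDiagOne n₁ n₂ σm * (Vmᵀ * Y))) := by
          simp only [Matrix.transpose_mul, Matrix.mul_assoc]
      _ = (Wedin.inc (Wedin.hiE R hR))ᵀ * (rectDiagOne n₁ n₂ σm * (Vmᵀ * Y)) := by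
          rw [hUm, Matrix.one_mul]
      _ = ((Wedin.inc (Wedin.hiE R hR))ᵀ * rectDiagOne n₁ n₂ σm) * (Vmᵀ * Y) := by
          rw [Matrix.mul_assoc]
      _ = (C * (Wedin.inc (Wedin.hiE R (hR.trans h12)))ᵀ) * (Vmᵀ * Y) := by
          rw [Wedin.incT_hi_mul_rd h12 hR σm]
      _ = C * ((Vm * Wedin.inc (Wedin.hiE R (hR.trans h12)))ᵀ * Y) := by
          simp only [Matrix.transpose_mul, Matrix.mul_assoc]
  have key2 : ∀ Y : Matrix (Fin n₁) (Fin R) ℝ,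
      V2ᵀ * ((Um * rectDiagOne n₁ n₂ σm * Vmᵀ)ᵀ * Y) = C' * (U2ᵀ * Y) := by
    intro Y
    rw [hU2i, hV2i]
    calc (Vm * Wedin.inc (Wedin.hiE R (hR.trans h12)))ᵀ
          * ((Um * rectDiagOne n₁ n₂ σm * Vmᵀ)ᵀ * Y)
        = (Wedin.inc (Wedin.hiE R (hR.trans h12)))ᵀ
            * ((Vmᵀ * Vm) * ((rectDiagOne n₁ n₂ σm)ᵀ * (Umᵀ * Y))) := by
          simp only [Matrix.transpose_mul, Matrix.transpose_transpose, Matrix.mul_assoc]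
      _ = (Wedin.inc (Wedin.hiE R (hR.trans h12)))ᵀ
            * ((rectDiagOne n₁ n₂ σm)ᵀ * (Umᵀ * Y)) := by
          rw [hVm, Matrix.one_mul]
      _ = ((Wedin.inc (Wedin.hiE R (hR.trans h12)))ᵀ * (rectDiagOne n₁ n₂ σm)ᵀ)
            * (Umᵀ * Y) := by rw [Matrix.mul_assoc]
      _ = (C' * (Wedin.inc (Wedin.hiE R hR))ᵀ) * (Umᵀ * Y) := by
          rw [Wedin.incT_hi2_mul_rdT h12 hR σm]
      _ = C' * ((Um * Wedin.inc (Wedin.hiE R hR))ᵀ * Y) := by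
          simp only [Matrix.transpose_mul, Matrix.mul_assoc]
  have eq1 : (U2ᵀ * U1) * D1 = C * (V2ᵀ * V1) - U2ᵀ * (E * V1) := by
    have h := key1 V1
    rw [← hM, Matrix.add_mul, Matrix.mul_add, hMsV1, ← Matrix.mul_assoc] at h
    exact eq_sub_of_add_eq h
  have eq2 : (V2ᵀ * V1) * D1 = C' * (U2ᵀ * U1) - V2ᵀ * (Eᵀ * U1) := by
    have h := key2 U1
    have hMT : Mstarᵀ + Eᵀ = (Um * rectDiagOne n₁ n₂ σm * Vmᵀ)ᵀ := by
      rw [← hM, Matrix.transpose_add]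
    rw [← hMT, Matrix.add_mul, Matrix.mul_add, hMsTU1, ← Matrix.mul_assoc] at h
    exact eq_sub_of_add_eq h
  -- norm inequalities
  have hU2Tle : ‖U2ᵀ‖ ≤ 1 := by rw [Wedin.norm_transpose]; exact Wedin.norm_le_one _ hU2o
  have hV2Tle : ‖V2ᵀ‖ ≤ 1 := by rw [Wedin.norm_transpose]; exact Wedin.norm_le_one _ hV2o
  have ha0 : (0 : ℝ) ≤ ‖U2ᵀ * U1‖ := norm_nonneg _
  have hb0 : (0 : ℝ) ≤ ‖V2ᵀ * V1‖ := norm_nonneg _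
  have ineq1 : σs R * ‖U2ᵀ * U1‖ ≤ μ * ‖V2ᵀ * V1‖ + ‖E * V1‖ := by
    calc σs R * ‖U2ᵀ * U1‖ ≤ ‖(U2ᵀ * U1) * D1‖ := lbound _
      _ = ‖C * (V2ᵀ * V1) - U2ᵀ * (E * V1)‖ := by rw [eq1]
      _ ≤ ‖C * (V2ᵀ * V1)‖ + ‖U2ᵀ * (E * V1)‖ := norm_sub_le _ _
      _ ≤ ‖C‖ * ‖V2ᵀ * V1‖ + ‖U2ᵀ‖ * ‖E * V1‖ :=
          add_le_add (Matrix.l2_opNorm_mul _ _) (Matrix.l2_opNorm_mul _ _)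
      _ ≤ μ * ‖V2ᵀ * V1‖ + 1 * ‖E * V1‖ :=
          add_le_add (mul_le_mul_of_nonneg_right hCle hb0)
            (mul_le_mul_of_nonneg_right hU2Tle (norm_nonneg _))
      _ = μ * ‖V2ᵀ * V1‖ + ‖E * V1‖ := by ring
  have ineq2 : σs R * ‖V2ᵀ * V1‖ ≤ μ * ‖U2ᵀ * U1‖ + ‖Eᵀ * U1‖ := by
    calc σs R * ‖V2ᵀ * V1‖ ≤ ‖(V2ᵀ * V1) * D1‖ := lbound _
      _ = ‖C' * (U2ᵀ * U1) - V2ᵀ * (Eᵀ * U1)‖ := by rw [eq2]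
      _ ≤ ‖C' * (U2ᵀ * U1)‖ + ‖V2ᵀ * (Eᵀ * U1)‖ := norm_sub_le _ _
      _ ≤ ‖C'‖ * ‖U2ᵀ * U1‖ + ‖V2ᵀ‖ * ‖Eᵀ * U1‖ :=
          add_le_add (Matrix.l2_opNorm_mul _ _) (Matrix.l2_opNorm_mul _ _)
      _ ≤ μ * ‖U2ᵀ * U1‖ + 1 * ‖Eᵀ * U1‖ :=
          add_le_add (mul_le_mul_of_nonneg_right hC'le ha0)
            (mul_le_mul_of_nonneg_right hV2Tle (norm_nonneg _))
      _ = μ * ‖U2ᵀ * U1‖ + ‖Eᵀ * U1‖ := by ring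
  have hεu : ‖Eᵀ * U1‖ ≤ ‖E‖ := by
    calc ‖Eᵀ * U1‖ ≤ ‖Eᵀ‖ * ‖U1‖ := Matrix.l2_opNorm_mul _ _
      _ ≤ ‖E‖ * 1 := by
          rw [Wedin.norm_transpose]
          exact mul_le_mul_of_nonneg_left (Wedin.norm_le_one _ hU1o) (norm_nonneg _)
      _ = ‖E‖ := mul_one _
  have hεv : ‖E * V1‖ ≤ ‖E‖ := by
    calc ‖E * V1‖ ≤ ‖E‖ * ‖V1‖ := Matrix.l2_opNorm_mul _ _
      _ ≤ ‖E‖ * 1 := mul_le_mul_of_nonneg_left (Wedin.norm_le_one _ hV1o) (norm_nonneg _)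
      _ = ‖E‖ := mul_one _
  have hεuε : ‖Eᵀ * U1‖ ≤ max ‖Eᵀ * U1‖ ‖E * V1‖ := le_max_left _ _
  have hεvε : ‖E * V1‖ ≤ max ‖Eᵀ * U1‖ ‖E * V1‖ := le_max_right _ _
  have hmax : σs R * max ‖U2ᵀ * U1‖ ‖V2ᵀ * V1‖
      ≤ μ * max ‖U2ᵀ * U1‖ ‖V2ᵀ * V1‖ + max ‖Eᵀ * U1‖ ‖E * V1‖ := by
    rcases max_cases ‖U2ᵀ * U1‖ ‖V2ᵀ * V1‖ with ⟨h1, h2⟩ | ⟨h1, h2⟩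
    · rw [h1]
      have h3 : μ * ‖V2ᵀ * V1‖ ≤ μ * ‖U2ᵀ * U1‖ := mul_le_mul_of_nonneg_left h2 hμ0
      linarith
    · rw [h1]
      have h3 : μ * ‖U2ᵀ * U1‖ ≤ μ * ‖V2ᵀ * V1‖ := mul_le_mul_of_nonneg_left h2.le hμ0
      linarith
  have hfin : max ‖U2ᵀ * U1‖ ‖V2ᵀ * V1‖
      ≤ max ‖Eᵀ * U1‖ ‖E * V1‖ / (σs R - σs (R + 1) - ‖E‖) := by
    rw [le_div_iff₀ hgapg]
    have expand : max ‖U2ᵀ * U1‖ ‖V2ᵀ * V1‖ * (σs R - σs (R + 1) - ‖E‖)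
        = σs R * max ‖U2ᵀ * U1‖ ‖V2ᵀ * V1‖ - μ * max ‖U2ᵀ * U1‖ ‖V2ᵀ * V1‖ := by
      rw [hμdef]; ring
    rw [expand]
    linarith
  have hsinU : sinThetaOp (Um.submatrix id (Fin.castLE hR)) U1 ≤ ‖U2ᵀ * U1‖ :=
    Wedin.sinTheta_le hR1 hR Um U1 hUm' hU1o
  have hsinV : sinThetaOp (Vm.submatrix id (Fin.castLE (hR.trans h12))) V1 ≤ ‖V2ᵀ * V1‖ :=
    Wedin.sinTheta_le hR1 (hR.trans h12) Vm V1 hVm' hV1o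
  constructor
  · refine max_le ?_ ?_
    · exact le_trans hsinU (le_trans (le_max_left _ _) hfin)
    · exact le_trans hsinV (le_trans (le_max_right _ _) hfin)
  · rw [div_le_div_iff₀ hgapg hgapg]
    exact mul_le_mul_of_nonneg_right (max_le hεu hεv) hgapg.le
end
end
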